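/- arXiv:2110.11301 — 5 statements merged into one kernel-verified Lean document; each statement's English description precedes it below -/
import Mathlib

section
/- For every M > 0 and every ε ∈ (0,1) there exists a positive integer m₀ = m₀(M,ε) such that for every m ≥ m₀ the following holds. Let X be a compact metric space, f : X → X a homeomorphism, and A : X → GL(d,ℝ) a continuous map with ‖A(x)‖ < M for every x ∈ X. Let y ∈ X (a nonperiodic point of f) and let v₀, w₀ ∈ ℝ^d be linearly independent unit vectors such that ‖A^m(y) v₀‖ < 2 ‖A^m(y) w₀‖. Then there exist invertible matrices L₀, …, L_{m−1} ∈ GL(d,ℝ) such that ‖A(f^j(y)) − L_j‖ < ε for every 0 ≤ j ≤ m−1 and the vector L_{m−1} ⋯ L₁ L₀ (v₀) belongs to the line span(A^m(y) w₀). -/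
open Function

/-- Composition `L (n-1) ∘ ⋯ ∘ L 1 ∘ L 0` of the first `n` terms of a sequence of
continuous linear endomorphisms. -/
noncomputable def seqComp {E : Type*} [NormedAddCommGroup E] [NormedSpace ℝ E]
    (L : ℕ → (E →L[ℝ] E)) : ℕ → (E →L[ℝ] E)
  | 0 => ContinuousLinearMap.id ℝ E
  | n + 1 => (L n).comp (seqComp L n)

/-- The iterates `A^n(x) = A(f^{n-1} x) ⋯ A(f x) A(x)` of a linear cocycle. -/
noncomputable def cocycleIter {X : Type*} {E : Type*} [NormedAddCommGroup E] [NormedSpace ℝ E]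
    (f : X → X) (A : X → (E →L[ℝ] E)) (n : ℕ) (x : X) : E →L[ℝ] E :=
  seqComp (fun j => A (f^[j] x)) n

/-!
Write `a_j = A^j v₀`, `b_j = A^j w₀` and `N = max M ε`. The rank-one correction
`B + ⟪x, ·⟫ / ‖x‖² • u` of an invertible `B` sends `x` to `B x + u`, costs `‖u‖ / ‖x‖` in
operator norm, and stays invertible as long as `⟪x, B⁻¹ (B x + u)⟫ ≠ 0`.

If at some time the angle between `a_j` and `b_j` has sine below `ε / N`, a single such
correction replaces `a_j` by its orthogonal projection onto the line of `b_j`, and the unperturbed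
cocycle carries that line to the line of `b_m`. Otherwise all these angles stay bounded below,
so `‖a_j + t b_j‖ ≥ (ε / N) t ‖b_j‖`: this lets the path `a_j + t_j b_j` be followed with `t_j`
growing geometrically, and once `t_{m-2}` is large the last step drops the `a`-component at once,
since `‖a_m‖ < 2 ‖b_m‖` is then a small fraction of the current vector.
-/

open scoped RealInnerProductSpace

section Gram

variable {F : Type*} [NormedAddCommGroup F] [InnerProductSpace ℝ F]

theorem real_inner_pos_of_norm_sub_lt {x y : F} (h : ‖y - x‖ < ‖x‖) : 0 < ⟪x, y⟫ := by
  have hx : 0 < ‖x‖ := (norm_nonneg _).trans_lt h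
  have hcs : -(‖x‖ * ‖y - x‖) ≤ ⟪x, y - x⟫ := neg_le_of_abs_le (abs_real_inner_le_norm x (y - x))
  have hsplit : ⟪x, y⟫ = ‖x‖ ^ 2 + ⟪x, y - x⟫ := by
    rw [inner_sub_right, real_inner_self_eq_norm_sq]; ring
  nlinarith

def gram (a b : F) : ℝ := ‖a‖ ^ 2 * ‖b‖ ^ 2 - ⟪a, b⟫ ^ 2

@[simp]
theorem gram_neg_right (a b : F) : gram a (-b) = gram a b := by
  simp [gram]

theorem gram_add_smul_left (a b : F) (t : ℝ) : gram (a + t • b) a = t ^ 2 * gram a b := by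
  simp only [gram, norm_add_sq_real, norm_smul, inner_add_left, real_inner_smul_left,
    real_inner_smul_right, real_inner_self_eq_norm_sq, real_inner_comm a b, Real.norm_eq_abs,
    mul_pow, sq_abs]
  ring

theorem gram_le (a b : F) : gram a b ≤ ‖a‖ ^ 2 * ‖b‖ ^ 2 := sub_le_self _ (sq_nonneg _)

theorem norm_inner_div_smul_sub_sq_mul {b : F} (hb : b ≠ 0) (a : F) :
    ‖(⟪a, b⟫ / ‖b‖ ^ 2) • b - a‖ ^ 2 * ‖b‖ ^ 2 = gram a b := by
  have hb : ‖b‖ ≠ 0 := norm_ne_zero_iff.mpr hb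
  rw [norm_sub_sq_real, norm_smul, real_inner_smul_left, real_inner_comm a b, Real.norm_eq_abs,
    mul_pow, sq_abs, gram]
  field_simp
  ring

theorem mul_abs_mul_norm_le_of_sq_mul_le_gram {a b : F} (ha : a ≠ 0) {c d : ℝ} (hc : 0 ≤ c)
    (hd : 0 ≤ d) (h : c ^ 2 * (‖a‖ ^ 2 * ‖b‖ ^ 2) ≤ d ^ 2 * gram a b) (t : ℝ) :
    c * (|t| * ‖b‖) ≤ d * ‖a + t • b‖ := by
  have ha : 0 < ‖a‖ ^ 2 := by positivity
  have key : (c * (|t| * ‖b‖)) ^ 2 * ‖a‖ ^ 2 ≤ (d * ‖a + t • b‖) ^ 2 * ‖a‖ ^ 2 :=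
    calc (c * (|t| * ‖b‖)) ^ 2 * ‖a‖ ^ 2 = t ^ 2 * (c ^ 2 * (‖a‖ ^ 2 * ‖b‖ ^ 2)) := by
          rw [mul_pow, mul_pow, sq_abs]; ring
      _ ≤ t ^ 2 * (d ^ 2 * gram a b) := by gcongr
      _ = d ^ 2 * gram (a + t • b) a := by rw [gram_add_smul_left]; ring
      _ ≤ d ^ 2 * (‖a + t • b‖ ^ 2 * ‖a‖ ^ 2) := by gcongr; exact gram_le _ _
      _ = (d * ‖a + t • b‖) ^ 2 * ‖a‖ ^ 2 := by ring
  exact (sq_le_sq₀ (by positivity) (by positivity)).mp (le_of_mul_le_mul_right key ha)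

end Gram

section Perturbation

variable {E : Type*} [NormedAddCommGroup E] [InnerProductSpace ℝ E] [FiniteDimensional ℝ E]

theorem ContinuousLinearEquiv.exists_apply_eq_norm_sub_le (B : E ≃L[ℝ] E) {x z : E}
    (h : ⟪x, B.symm z⟫ ≠ 0) :
    ∃ L : E ≃L[ℝ] E, L x = z ∧ ‖(B : E →L[ℝ] E) - L‖ ≤ ‖z - B x‖ / ‖x‖ := by
  have hx : x ≠ 0 := by rintro rfl; simp at h
  have hx2 : ‖x‖ ^ 2 ≠ 0 := by positivity
  set φ : E →L[ℝ] ℝ := (‖x‖ ^ 2)⁻¹ • innerSL ℝ x with hφ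
  have hφ_apply (u : E) : φ u = ⟪x, u⟫ / ‖x‖ ^ 2 := by simp [hφ, div_eq_inv_mul]
  set T : E →L[ℝ] E := B + φ.smulRight (z - B x)
  have hT_apply (u : E) : T u = B u + φ u • (z - B x) := rfl
  have hTx : T x = z := by
    rw [hT_apply, hφ_apply, real_inner_self_eq_norm_sq, div_self hx2, one_smul, add_sub_cancel]
  -- `T u = 0` forces `u = φ u • (x - B⁻¹ z)`, and applying `φ` gives `φ u * φ (B⁻¹ z) = 0`.
  have hT_inj : Injective T := by
    refine (injective_iff_map_eq_zero T).mpr fun u hu => ?_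
    have hu' : u = φ u • (x - B.symm z) := by
      have := congrArg B.symm hu
      rw [hT_apply, map_add, map_smul, map_sub, B.symm_apply_apply, B.symm_apply_apply,
        map_zero] at this
      rw [← neg_sub, smul_neg, ← eq_neg_iff_add_eq_zero.mpr this]
    have hφu : φ u * φ (B.symm z) = 0 := by
      have := congrArg φ hu'
      rw [ContinuousLinearMap.map_smul, ContinuousLinearMap.map_sub, smul_eq_mul] at this
      rw [hφ_apply x, real_inner_self_eq_norm_sq, div_self hx2] at this
      linarith
    have hφu0 : φ u = 0 := by
      rcases mul_eq_zero.mp hφu with h0 | h0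
      · exact h0
      · exact absurd h0 (by rw [hφ_apply]; exact div_ne_zero h hx2)
    rw [hu', hφu0, zero_smul]
  refine ⟨(LinearEquiv.ofInjectiveEndo (T : E →ₗ[ℝ] E) hT_inj).toContinuousLinearEquiv, hTx, ?_⟩
  have hBT : (B : E →L[ℝ] E) - ((LinearEquiv.ofInjectiveEndo (T : E →ₗ[ℝ] E)
      hT_inj).toContinuousLinearEquiv : E →L[ℝ] E) = -φ.smulRight (z - B x) := by
    ext u; simp [hT_apply]
  have hφ_norm : ‖φ‖ = ‖x‖⁻¹ := by
    rw [hφ, norm_smul, innerSL_apply_norm, norm_inv, norm_pow, Real.norm_eq_abs, abs_norm]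
    field_simp
  rw [hBT, norm_neg, ContinuousLinearMap.norm_smulRight_apply, hφ_norm, inv_mul_eq_div]

end Perturbation

theorem seqComp_congr {E : Type*} [NormedAddCommGroup E] [NormedSpace ℝ E]
    {L L' : ℕ → E →L[ℝ] E} {n : ℕ} (h : ∀ j < n, L j = L' j) : seqComp L n = seqComp L' n := by
  induction n with
  | zero => rfl
  | succ n ih =>
    simp only [seqComp, h n n.lt_succ_self, ih fun j hj => h j (hj.trans n.lt_succ_self)]

theorem seqComp_apply_ne_zero {E : Type*} [NormedAddCommGroup E] [NormedSpace ℝ E]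
    (A : ℕ → E ≃L[ℝ] E) (n : ℕ) {x : E} (hx : x ≠ 0) :
    seqComp (fun j => (A j : E →L[ℝ] E)) n x ≠ 0 := by
  induction n with
  | zero => exact hx
  | succ n ih => exact fun h => ih ((A n).map_eq_zero_iff.mp h)

theorem norm_seqComp_succ_apply_le {E : Type*} [NormedAddCommGroup E] [NormedSpace ℝ E]
    {A : ℕ → E ≃L[ℝ] E} {N : ℝ} (hA : ∀ j, ‖(A j : E →L[ℝ] E)‖ ≤ N) (n : ℕ) (x : E) :
    ‖seqComp (fun j => (A j : E →L[ℝ] E)) (n + 1) x‖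
      ≤ N * ‖seqComp (fun j => (A j : E →L[ℝ] E)) n x‖ :=
  ((A n : E →L[ℝ] E).le_opNorm _).trans (mul_le_mul_of_nonneg_right (hA n) (norm_nonneg _))

def PerturbReachable {E : Type*} [NormedAddCommGroup E] [NormedSpace ℝ E]
    (A : ℕ → E ≃L[ℝ] E) (ε : ℝ) (n : ℕ) (x y : E) : Prop :=
  ∃ L : ℕ → E ≃L[ℝ] E, (∀ j < n, ‖(A j : E →L[ℝ] E) - L j‖ < ε) ∧
    seqComp (fun j => (L j : E →L[ℝ] E)) n x = y

namespace PerturbReachable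

section Normed

variable {E : Type*} [NormedAddCommGroup E] [NormedSpace ℝ E] {A : ℕ → E ≃L[ℝ] E} {ε : ℝ}
  {n : ℕ} {x y z : E}

theorem refl (A : ℕ → E ≃L[ℝ] E) (ε : ℝ) (x : E) : PerturbReachable A ε 0 x x :=
  ⟨A, fun _ h => absurd h (Nat.not_lt_zero _), rfl⟩

theorem succ_of_apply_eq (h : PerturbReachable A ε n x y) (L' : E ≃L[ℝ] E)
    (hL' : ‖(A n : E →L[ℝ] E) - L'‖ < ε) (hy : L' y = z) : PerturbReachable A ε (n + 1) x z := by
  obtain ⟨L, hL, hxy⟩ := h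
  refine ⟨update L n L', fun j hj => ?_, ?_⟩
  · rcases (Nat.lt_succ_iff_lt_or_eq.mp hj) with hj | rfl
    · rw [update_of_ne hj.ne]; exact hL j hj
    · rwa [update_self]
  · have hpre : seqComp (fun j => (update L n L' j : E →L[ℝ] E)) n
        = seqComp (fun j => (L j : E →L[ℝ] E)) n :=
      seqComp_congr fun j hj => by rw [update_of_ne hj.ne]
    change (update L n L' n : E →L[ℝ] E) (seqComp _ n x) = z
    rw [hpre, update_self, hxy, ← hy]
    rfl

theorem succ_apply (hε : 0 < ε) (h : PerturbReachable A ε n x y) :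
    PerturbReachable A ε (n + 1) x (A n y) :=
  h.succ_of_apply_eq (A n) (by rwa [sub_self, norm_zero]) rfl

theorem seqComp_of_le (hε : 0 < ε) {u : E}
    (h : PerturbReachable A ε n x (seqComp (fun j => (A j : E →L[ℝ] E)) n u)) {n' : ℕ}
    (hn : n ≤ n') :
    PerturbReachable A ε n' x (seqComp (fun j => (A j : E →L[ℝ] E)) n' u) := by
  induction n', hn using Nat.le_induction with
  | base => exact h
  | succ n' _ ih => exact ih.succ_apply hε

theorem seqComp_self (hε : 0 < ε) (A : ℕ → E ≃L[ℝ] E) (n : ℕ) (x : E) :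
    PerturbReachable A ε n x (seqComp (fun j => (A j : E →L[ℝ] E)) n x) :=
  (refl A ε x).seqComp_of_le hε n.zero_le

end Normed

section InnerProduct

variable {E : Type*} [NormedAddCommGroup E] [InnerProductSpace ℝ E] [FiniteDimensional ℝ E]
  {A : ℕ → E ≃L[ℝ] E} {ε : ℝ} {n : ℕ} {x y z : E}

theorem succ (h : PerturbReachable A ε n x y) (hyz : ⟪y, (A n).symm z⟫ ≠ 0)
    (hz : ‖z - A n y‖ < ε * ‖y‖) : PerturbReachable A ε (n + 1) x z := by
  have hy : 0 < ‖y‖ := norm_pos_iff.mpr (by rintro rfl; simp at hyz)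
  obtain ⟨L', hL'y, hL'⟩ := (A n).exists_apply_eq_norm_sub_le hyz
  exact h.succ_of_apply_eq L' (hL'.trans_lt ((div_lt_iff₀ hy).mpr hz)) hL'y

theorem succ_apply_of_norm_sub_lt {N : ℝ} (hA : ‖(A n : E →L[ℝ] E)‖ ≤ N) (hε : 0 < ε)
    (hεN : ε ≤ N) (h : PerturbReachable A ε n x y) {y' : E} (hy' : N * ‖y' - y‖ < ε * ‖y‖) :
    PerturbReachable A ε (n + 1) x (A n y') := by
  have hN : 0 < N := hε.trans_le hεN
  have hclose : ‖y' - y‖ < ‖y‖ :=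
    lt_of_mul_lt_mul_left (hy'.trans_le (mul_le_mul_of_nonneg_right hεN (norm_nonneg y))) hN.le
  refine h.succ ?_ ?_
  · rw [ContinuousLinearEquiv.symm_apply_apply]
    exact (real_inner_pos_of_norm_sub_lt hclose).ne'
  · calc ‖A n y' - A n y‖ = ‖(A n : E →L[ℝ] E) (y' - y)‖ := by simp
      _ ≤ N * ‖y' - y‖ := (ContinuousLinearMap.le_opNorm _ _).trans (by gcongr)
      _ < ε * ‖y‖ := hy'

end InnerProduct

end PerturbReachable

/-- Once the angles have sine at least `ε / N`, the `b`-coefficient may grow by the factor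
`1 + ε² / (2 N²)` per step at a perturbation cost below `ε`. -/
noncomputable def shearCoeff (N ε : ℝ) (j : ℕ) : ℝ := ε / (2 * N) * (1 + ε ^ 2 / (2 * N ^ 2)) ^ j

theorem shearCoeff_pos {N ε : ℝ} (hN : 0 < N) (hε : 0 < ε) (j : ℕ) : 0 < shearCoeff N ε j := by
  unfold shearCoeff; positivity

theorem shearCoeff_succ_sub (N ε : ℝ) (j : ℕ) :
    shearCoeff N ε (j + 1) - shearCoeff N ε j = ε ^ 2 / (2 * N ^ 2) * shearCoeff N ε j := by
  simp only [shearCoeff, pow_succ]; ring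

theorem tendsto_shearCoeff_atTop {N ε : ℝ} (hN : 0 < N) (hε : 0 < ε) :
    Filter.Tendsto (shearCoeff N ε) Filter.atTop Filter.atTop :=
  (tendsto_pow_atTop_atTop_of_one_lt (lt_add_of_pos_right 1 (by positivity))).const_mul_atTop
    (by positivity)

section Interchange

variable {E : Type*} [NormedAddCommGroup E] [InnerProductSpace ℝ E] [FiniteDimensional ℝ E]
  {A : ℕ → E ≃L[ℝ] E} {N ε : ℝ}

local notation "P" => seqComp (fun j => ((A j : E ≃L[ℝ] E) : E →L[ℝ] E))

theorem exists_perturbReachable_of_gram_lt (hA : ∀ j, ‖(A j : E →L[ℝ] E)‖ ≤ N) (hε : 0 < ε)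
    (hεN : ε ≤ N) {v w : E} (hw : w ≠ 0) {j m : ℕ} (hjm : j < m)
    (hgram : N ^ 2 * gram (P j v) (P j w) < ε ^ 2 * (‖P j v‖ ^ 2 * ‖P j w‖ ^ 2)) :
    ∃ z ∈ Submodule.span ℝ {P m w}, PerturbReachable A ε m v z := by
  set a := P j v
  set b := P j w
  have hb : b ≠ 0 := seqComp_apply_ne_zero A j hw
  set r := ⟪a, b⟫ / ‖b‖ ^ 2
  -- jump from `a` to its orthogonal projection `r • b` on the line of `b`
  have hjump : N * ‖r • b - a‖ < ε * ‖a‖ := by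
    have hsq : (N * ‖r • b - a‖) ^ 2 * ‖b‖ ^ 2 < (ε * ‖a‖) ^ 2 * ‖b‖ ^ 2 := by
      rw [mul_pow, mul_assoc, norm_inner_div_smul_sub_sq_mul hb a]
      linarith
    exact (sq_lt_sq₀ (mul_nonneg (hε.le.trans hεN) (norm_nonneg _)) (by positivity)).mp
      (lt_of_mul_lt_mul_right hsq (pow_pos (norm_pos_iff.mpr hb) 2).le)
  have hreach : PerturbReachable A ε (j + 1) v (P (j + 1) (r • w)) := by
    rw [show P (j + 1) (r • w) = A j (r • b) by rw [map_smul, map_smul]; rfl]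
    exact (PerturbReachable.seqComp_self hε A j v).succ_apply_of_norm_sub_lt (hA j) hε hεN hjump
  refine ⟨P m (r • w), ?_, hreach.seqComp_of_le hε hjm⟩
  rw [map_smul]
  exact Submodule.smul_mem _ _ (Submodule.mem_span_singleton_self _)

theorem perturbReachable_shear (hA : ∀ j, ‖(A j : E →L[ℝ] E)‖ ≤ N) (hε : 0 < ε)
    (hεN : ε ≤ N) {v w : E} (hv : ‖v‖ = 1) (hw : ‖w‖ = 1) {k : ℕ}
    (hgram : ∀ j ≤ k, ε ^ 2 * (‖P j v‖ ^ 2 * ‖P j w‖ ^ 2) ≤ N ^ 2 * gram (P j v) (P j w)) :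
    PerturbReachable A ε (k + 1) v (P (k + 1) v + shearCoeff N ε k • P (k + 1) w) := by
  have hN : 0 < N := hε.trans_le hεN
  set t := shearCoeff N ε
  induction k with
  | zero =>
    rw [show P 1 v + t 0 • P 1 w = A 0 (v + t 0 • w) by rw [map_add, map_smul]; rfl]
    refine (PerturbReachable.refl A ε v).succ_apply_of_norm_sub_lt (hA 0) hε hεN ?_
    rw [add_sub_cancel_left, norm_smul, hw, hv, Real.norm_of_nonneg (shearCoeff_pos hN hε 0).le]
    simp only [shearCoeff]
    field_simp
    linarith
  | succ k ih =>
    set b := P (k + 1) w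
    set y := P (k + 1) v + t k • b
    have htk := shearCoeff_pos hN hε k
    have hb : 0 < ‖b‖ :=
      norm_pos_iff.mpr (seqComp_apply_ne_zero A _ (norm_ne_zero_iff.mp (by simp [hw])))
    have hy : ε * (t k * ‖b‖) ≤ N * ‖y‖ := by
      have := mul_abs_mul_norm_le_of_sq_mul_le_gram
        (seqComp_apply_ne_zero A _ (norm_ne_zero_iff.mp (by simp [hv]))) hε.le hN.le
        (hgram (k + 1) le_rfl) (t k)
      rwa [abs_of_pos htk] at this
    have hy0 : 0 < ‖y‖ :=
      pos_of_mul_pos_right ((by positivity : 0 < ε * (t k * ‖b‖)).trans_le hy) hN.le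
    rw [show P (k + 2) v + t (k + 1) • P (k + 2) w = A (k + 1) (y + (t (k + 1) - t k) • b)
      by rw [map_add, map_add, map_smul, map_smul, add_assoc, ← add_smul, add_sub_cancel]; rfl]
    refine (ih fun j hj => hgram j (by omega)).succ_apply_of_norm_sub_lt (hA _) hε hεN ?_
    rw [add_sub_cancel_left, norm_smul, shearCoeff_succ_sub, Real.norm_of_nonneg (by positivity)]
    calc N * (ε ^ 2 / (2 * N ^ 2) * t k * ‖b‖) = ε / (2 * N) * (ε * (t k * ‖b‖)) := by
          field_simp
      _ ≤ ε / (2 * N) * (N * ‖y‖) := by gcongr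
      _ < ε * ‖y‖ := by
          field_simp
          nlinarith

theorem exists_perturbReachable_of_le_gram (hA : ∀ j, ‖(A j : E →L[ℝ] E)‖ ≤ N) (hε : 0 < ε)
    (hεN : ε ≤ N) {v w : E} (hv : ‖v‖ = 1) (hw : ‖w‖ = 1) {k : ℕ}
    (hk : 2 * N ^ 2 ≤ ε ^ 2 * shearCoeff N ε k)
    (hgram : ∀ j < k + 2, ε ^ 2 * (‖P j v‖ ^ 2 * ‖P j w‖ ^ 2) ≤ N ^ 2 * gram (P j v) (P j w))
    (hinner : 0 ≤ ⟪P (k + 1) v, P (k + 1) w⟫) (hvw : ‖P (k + 2) v‖ < 2 * ‖P (k + 2) w‖) :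
    ∃ z ∈ Submodule.span ℝ {P (k + 2) w}, PerturbReachable A ε (k + 2) v z := by
  have hN : 0 < N := hε.trans_le hεN
  set t := shearCoeff N ε k
  set a := P (k + 1) v
  set b := P (k + 1) w
  set y := a + t • b
  have ht := shearCoeff_pos hN hε k
  have hb : 0 < ‖b‖ :=
    norm_pos_iff.mpr (seqComp_apply_ne_zero A _ (norm_ne_zero_iff.mp (by simp [hw])))
  have hy : ε * (t * ‖b‖) ≤ N * ‖y‖ := by
    have := mul_abs_mul_norm_le_of_sq_mul_le_gram
      (seqComp_apply_ne_zero A _ (norm_ne_zero_iff.mp (by simp [hv]))) hε.le hN.le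
      (hgram (k + 1) (by omega)) t
    rwa [abs_of_pos ht] at this
  -- the last step drops the `a`-component, whose size is controlled by `hvw`
  refine ⟨t • P (k + 2) w, Submodule.smul_mem _ _ (Submodule.mem_span_singleton_self _),
    (perturbReachable_shear hA hε hεN hv hw fun j hj => hgram j (by omega)).succ ?_ ?_⟩
  · rw [show t • P (k + 2) w = A (k + 1) (t • b) by rw [map_smul]; rfl,
      ContinuousLinearEquiv.symm_apply_apply, inner_smul_right, inner_add_left,
      real_inner_smul_left, real_inner_self_eq_norm_sq]
    positivity
  · rw [show A (k + 1) y = P (k + 2) v + t • P (k + 2) w by rw [map_add, map_smul]; rfl,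
      sub_add_cancel_right, norm_neg]
    have key : N * (2 * N * ‖b‖) ≤ N * (ε * ‖y‖) :=
      calc N * (2 * N * ‖b‖) = 2 * N ^ 2 * ‖b‖ := by ring
        _ ≤ ε ^ 2 * t * ‖b‖ := by gcongr
        _ = ε * (ε * (t * ‖b‖)) := by ring
        _ ≤ ε * (N * ‖y‖) := by gcongr
        _ = N * (ε * ‖y‖) := by ring
    calc ‖P (k + 2) v‖ < 2 * ‖P (k + 2) w‖ := hvw
      _ ≤ 2 * N * ‖b‖ := by rw [mul_assoc]; gcongr; exact norm_seqComp_succ_apply_le hA (k + 1) w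
      _ ≤ ε * ‖y‖ := le_of_mul_le_mul_left key hN

theorem exists_perturbReachable_mem_span (hA : ∀ j, ‖(A j : E →L[ℝ] E)‖ ≤ N) (hε : 0 < ε)
    (hεN : ε ≤ N) {v w : E} (hv : ‖v‖ = 1) (hw : ‖w‖ = 1) {k : ℕ}
    (hk : 2 * N ^ 2 ≤ ε ^ 2 * shearCoeff N ε k) (hvw : ‖P (k + 2) v‖ < 2 * ‖P (k + 2) w‖) :
    ∃ z ∈ Submodule.span ℝ {P (k + 2) w}, PerturbReachable A ε (k + 2) v z := by
  by_cases hsmall : ∃ j < k + 2,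
      N ^ 2 * gram (P j v) (P j w) < ε ^ 2 * (‖P j v‖ ^ 2 * ‖P j w‖ ^ 2)
  · obtain ⟨j, hj, hgram⟩ := hsmall
    exact exists_perturbReachable_of_gram_lt hA hε hεN (norm_ne_zero_iff.mp (by simp [hw])) hj hgram
  push Not at hsmall
  rcases le_total 0 ⟪P (k + 1) v, P (k + 1) w⟫ with hinner | hinner
  · exact exists_perturbReachable_of_le_gram hA hε hεN hv hw hk hsmall hinner hvw
  -- otherwise shear towards `-w`, which spans the same line as `w`
  obtain ⟨z, hz, hreach⟩ := exists_perturbReachable_of_le_gram (w := -w) hA hε hεN hv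
    (by rw [norm_neg, hw]) hk (by simpa using hsmall) (by simpa using hinner) (by simpa using hvw)
  refine ⟨z, ?_, hreach⟩
  rwa [map_neg, ← Set.neg_singleton, Submodule.span_neg] at hz

end Interchange

theorem exists_interchanging_sequence_general
    (M : ℝ) (ε : ℝ) (hε : ε ∈ Set.Ioo (0 : ℝ) 1) :
    ∃ m₀ : ℕ, 0 < m₀ ∧
      ∀ m : ℕ, m₀ ≤ m →
      ∀ (X : Type) (_ : MetricSpace X), ∀ (_ : CompactSpace X),
      ∀ (f : X ≃ₜ X) (d : ℕ)
        (A : X → (EuclideanSpace ℝ (Fin d) ≃L[ℝ] EuclideanSpace ℝ (Fin d))),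
        Continuous (fun x =>
          (A x : EuclideanSpace ℝ (Fin d) →L[ℝ] EuclideanSpace ℝ (Fin d))) →
        (∀ x : X, ‖(A x : EuclideanSpace ℝ (Fin d) →L[ℝ] EuclideanSpace ℝ (Fin d))‖ < M) →
        ∀ y : X, (∀ k : ℕ, 1 ≤ k → (⇑f)^[k] y ≠ y) →
        ∀ v₀ w₀ : EuclideanSpace ℝ (Fin d), ‖v₀‖ = 1 → ‖w₀‖ = 1 →
          LinearIndependent ℝ ![v₀, w₀] →
          ‖cocycleIter (⇑f)
              (fun x => (A x : EuclideanSpace ℝ (Fin d) →L[ℝ] EuclideanSpace ℝ (Fin d)))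
              m y v₀‖
            < 2 * ‖cocycleIter (⇑f)
              (fun x => (A x : EuclideanSpace ℝ (Fin d) →L[ℝ] EuclideanSpace ℝ (Fin d)))
              m y w₀‖ →
          ∃ L : ℕ → (EuclideanSpace ℝ (Fin d) ≃L[ℝ] EuclideanSpace ℝ (Fin d)),
            (∀ j < m,
              ‖(A ((⇑f)^[j] y) : EuclideanSpace ℝ (Fin d) →L[ℝ] EuclideanSpace ℝ (Fin d))
                - (L j : EuclideanSpace ℝ (Fin d) →L[ℝ] EuclideanSpace ℝ (Fin d))‖ < ε) ∧
            seqComp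
              (fun j => (L j : EuclideanSpace ℝ (Fin d) →L[ℝ] EuclideanSpace ℝ (Fin d)))
              m v₀
              ∈ Submodule.span ℝ
                  {cocycleIter (⇑f)
                    (fun x => (A x : EuclideanSpace ℝ (Fin d) →L[ℝ] EuclideanSpace ℝ (Fin d)))
                    m y w₀} := by
  set N := max M ε
  have hN : 0 < N := hε.1.trans_le (le_max_right M ε)
  obtain ⟨n, hn⟩ := Filter.eventually_atTop.mp
    (((tendsto_shearCoeff_atTop hN hε.1).const_mul_atTop (pow_pos hε.1 2)).eventually_ge_atTop
      (2 * N ^ 2))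
  refine ⟨n + 2, by omega, fun m hm X _ _ f d A _ hA y _ v₀ w₀ hv hw _ hvw => ?_⟩
  obtain ⟨k, rfl⟩ : ∃ k, m = k + 2 := ⟨m - 2, by omega⟩
  obtain ⟨z, hz, L, hL, hLz⟩ := exists_perturbReachable_mem_span (A := fun j => A (f^[j] y))
    (fun j => (hA _).le.trans (le_max_left M ε)) hε.1 (le_max_right M ε) hv hw (hn k (by omega)) hvw
  exact ⟨L, hL, hLz ▸ hz⟩

theorem exists_interchanging_sequence
    (M : ℝ) (hM : 0 < M) (ε : ℝ) (hε : ε ∈ Set.Ioo (0 : ℝ) 1) :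
    ∃ m₀ : ℕ, 0 < m₀ ∧
      ∀ m : ℕ, m₀ ≤ m →
      ∀ (X : Type) (_ : MetricSpace X), ∀ (_ : CompactSpace X),
      ∀ (f : X ≃ₜ X) (d : ℕ)
        (A : X → (EuclideanSpace ℝ (Fin d) ≃L[ℝ] EuclideanSpace ℝ (Fin d))),
        Continuous (fun x =>
          (A x : EuclideanSpace ℝ (Fin d) →L[ℝ] EuclideanSpace ℝ (Fin d))) →
        (∀ x : X, ‖(A x : EuclideanSpace ℝ (Fin d) →L[ℝ] EuclideanSpace ℝ (Fin d))‖ < M) →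
        ∀ y : X, (∀ k : ℕ, 1 ≤ k → (⇑f)^[k] y ≠ y) →
        ∀ v₀ w₀ : EuclideanSpace ℝ (Fin d), ‖v₀‖ = 1 → ‖w₀‖ = 1 →
          LinearIndependent ℝ ![v₀, w₀] →
          ‖cocycleIter (⇑f)
              (fun x => (A x : EuclideanSpace ℝ (Fin d) →L[ℝ] EuclideanSpace ℝ (Fin d)))
              m y v₀‖
            < 2 * ‖cocycleIter (⇑f)
              (fun x => (A x : EuclideanSpace ℝ (Fin d) →L[ℝ] EuclideanSpace ℝ (Fin d)))
              m y w₀‖ →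
          ∃ L : ℕ → (EuclideanSpace ℝ (Fin d) ≃L[ℝ] EuclideanSpace ℝ (Fin d)),
            (∀ j < m,
              ‖(A ((⇑f)^[j] y) : EuclideanSpace ℝ (Fin d) →L[ℝ] EuclideanSpace ℝ (Fin d))
                - (L j : EuclideanSpace ℝ (Fin d) →L[ℝ] EuclideanSpace ℝ (Fin d))‖ < ε) ∧
            seqComp
              (fun j => (L j : EuclideanSpace ℝ (Fin d) →L[ℝ] EuclideanSpace ℝ (Fin d)))
              m v₀
              ∈ Submodule.span ℝ
                  {cocycleIter (⇑f)
                    (fun x => (A x : EuclideanSpace ℝ (Fin d) →L[ℝ] EuclideanSpace ℝ (Fin d)))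
                    m y w₀} :=
  exists_interchanging_sequence_general M ε hε
end

section
/- Let V be a finite-dimensional real inner product space with two decompositions V = E₀ ⊕ F₀ and V = E₁ ⊕ F₁ into pairs of complementary nonzero subspaces, and let T : V → V be a linear map. Define the blocks T^{++} = π_{E₁} ∘ T restricted to E₀, T^{−+} = π_{F₁} ∘ T restricted to E₀, T^{+−} = π_{E₁} ∘ T restricted to F₀, and T^{−−} = π_{F₁} ∘ T restricted to F₀, where π_{E₁} and π_{F₁} are the projections associated with the decomposition V = E₁ ⊕ F₁, and set ‖T‖_max = max{‖T^{++}‖, ‖T^{+−}‖, ‖T^{−+}‖, ‖T^{−−}‖}. Suppose s₀, s₁ ∈ (0,1] are such that sin ∠(e,f) ≥ s₀ for all nonzero e ∈ E₀ and f ∈ F₀, and sin ∠(e,f) ≥ s₁ for all nonzero e ∈ E₁ and f ∈ F₁. Then: (1) ‖T‖ ≤ 4 s₀^{−1} ‖T‖_max, and (2) ‖T‖_max ≤ s₁^{−1} ‖T‖. -/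
/-!
For `p ∈ P` and `q ∈ Q`, `‖p + q‖` is the distance from `p` to `-q`, hence at least the
distance `‖p‖ sin ∠(p, q)` from `p` to the line `ℝ q`. So if every angle between `P` and `Q` has
sine at least `s`, the projections of the splitting `P ⊕ Q` have norm at most `s⁻¹`. Each block
of `T` is such a projection of `T` restricted to a subspace, whence `‖T‖_max ≤ s₁⁻¹ ‖T‖`.
Conversely, writing `v = e + f` with `‖e‖, ‖f‖ ≤ s₀⁻¹ ‖v‖`, each of `T e` and `T f` is the sum
of two blocks, whence `‖T‖ ≤ 4 s₀⁻¹ ‖T‖_max`.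
-/

open InnerProductGeometry

/-- The block of `T` with domain `D` obtained by composing with the projection onto `P`
along `Q` (for the decomposition `V = P ⊕ Q` encoded by `h : IsCompl P Q`). -/
noncomputable def blockOf {V : Type*} [NormedAddCommGroup V] [InnerProductSpace ℝ V]
    [FiniteDimensional ℝ V] (D P Q : Submodule ℝ V) (h : IsCompl P Q)
    (T : V →L[ℝ] V) : D →L[ℝ] P :=
  LinearMap.toContinuousLinearMap
    ((P.linearProjOfIsCompl Q h) ∘ₗ (T : V →ₗ[ℝ] V) ∘ₗ D.subtype)

/-- `‖T‖_max`: the maximum of the norms of the four blocks of `T` with respect to the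
decompositions `V = E₀ ⊕ F₀` (domain) and `V = E₁ ⊕ F₁` (target). -/
noncomputable def blockMaxNorm {V : Type*} [NormedAddCommGroup V] [InnerProductSpace ℝ V]
    [FiniteDimensional ℝ V] (E₀ F₀ E₁ F₁ : Submodule ℝ V) (h₁ : IsCompl E₁ F₁)
    (T : V →L[ℝ] V) : ℝ :=
  max (max ‖blockOf E₀ E₁ F₁ h₁ T‖ ‖blockOf F₀ E₁ F₁ h₁ T‖)
    (max ‖blockOf E₀ F₁ E₁ h₁.symm T‖ ‖blockOf F₀ F₁ E₁ h₁.symm T‖)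

section Angle

variable {V : Type*} [NormedAddCommGroup V] [InnerProductSpace ℝ V]

theorem norm_mul_sin_angle_le_norm_add (p q : V) : ‖p‖ * Real.sin (angle p q) ≤ ‖p + q‖ := by
  rcases eq_or_ne q 0 with rfl | hq
  · simp
  have hsq : (Real.sin (angle p q) * (‖p‖ * ‖q‖)) ^ 2 ≤ (‖p + q‖ * ‖q‖) ^ 2 := by
    rw [sin_angle_mul_norm_mul_norm,
      Real.sq_sqrt (sub_nonneg.mpr (real_inner_mul_inner_self_le p q)), mul_pow,
      norm_add_sq_real, real_inner_self_eq_norm_sq, real_inner_self_eq_norm_sq]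
    -- the difference of the two sides is `(⟪p, q⟫ + ‖q‖²)²`
    nlinarith [sq_nonneg (inner ℝ p q + ‖q‖ ^ 2)]
  have h := (pow_le_pow_iff_left₀ (mul_nonneg (sin_angle_nonneg p q) (by positivity))
    (by positivity) two_ne_zero).mp hsq
  rw [← mul_assoc, mul_comm (Real.sin _)] at h
  exact le_of_mul_le_mul_right h (norm_pos_iff.mpr hq)

variable {P Q : Submodule ℝ V} {s : ℝ}

theorem sin_angle_ge_symm (hang : ∀ e ∈ P, ∀ f ∈ Q, e ≠ 0 → f ≠ 0 → s ≤ Real.sin (angle e f)) :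
    ∀ e ∈ Q, ∀ f ∈ P, e ≠ 0 → f ≠ 0 → s ≤ Real.sin (angle e f) :=
  fun e he f hf he0 hf0 => angle_comm f e ▸ hang f hf e he hf0 he0

theorem mul_norm_le_norm_add_of_sin_angle_ge (hs : s ≤ 1)
    (hang : ∀ e ∈ P, ∀ f ∈ Q, e ≠ 0 → f ≠ 0 → s ≤ Real.sin (angle e f))
    {p q : V} (hp : p ∈ P) (hq : q ∈ Q) : s * ‖p‖ ≤ ‖p + q‖ := by
  rcases eq_or_ne p 0 with rfl | hp0
  · simp
  rcases eq_or_ne q 0 with rfl | hq0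
  · simpa using mul_le_of_le_one_left (norm_nonneg p) hs
  calc s * ‖p‖ ≤ ‖p‖ * Real.sin (angle p q) := by
        rw [mul_comm]; exact mul_le_mul_of_nonneg_left (hang p hp q hq hp0 hq0) (norm_nonneg p)
    _ ≤ ‖p + q‖ := norm_mul_sin_angle_le_norm_add p q

theorem mul_norm_projection_le (h : IsCompl P Q) (hs : s ≤ 1)
    (hang : ∀ e ∈ P, ∀ f ∈ Q, e ≠ 0 → f ≠ 0 → s ≤ Real.sin (angle e f)) (v : V) :
    s * ‖P.projection Q h v‖ ≤ ‖v‖ := by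
  have hv := Submodule.projection_add_projection_eq_self h v
  calc s * ‖P.projection Q h v‖ ≤ ‖P.projection Q h v + Q.projection P h.symm v‖ :=
        mul_norm_le_norm_add_of_sin_angle_ge hs hang (Submodule.projection_apply_mem h v)
          (Submodule.projection_apply_mem h.symm v)
    _ = ‖v‖ := by rw [hv]

theorem norm_projection_le_inv_mul (h : IsCompl P Q) (hs : s ∈ Set.Ioc (0 : ℝ) 1)
    (hang : ∀ e ∈ P, ∀ f ∈ Q, e ≠ 0 → f ≠ 0 → s ≤ Real.sin (angle e f)) (v : V) :
    ‖P.projection Q h v‖ ≤ s⁻¹ * ‖v‖ :=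
  (le_inv_mul_iff₀ hs.1).mpr (mul_norm_projection_le h hs.2 hang v)

end Angle

section Blocks

variable {V : Type*} [NormedAddCommGroup V] [InnerProductSpace ℝ V] [FiniteDimensional ℝ V]

theorem coe_blockOf_apply (D P Q : Submodule ℝ V) (h : IsCompl P Q) (T : V →L[ℝ] V) (x : D) :
    (blockOf D P Q h T x : V) = P.projection Q h (T x) :=
  rfl

theorem norm_blockOf_le_inv_mul (D : Submodule ℝ V) {P Q : Submodule ℝ V} (h : IsCompl P Q)
    {s : ℝ} (hs : s ∈ Set.Ioc (0 : ℝ) 1)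
    (hang : ∀ e ∈ P, ∀ f ∈ Q, e ≠ 0 → f ≠ 0 → s ≤ Real.sin (angle e f)) (T : V →L[ℝ] V) :
    ‖blockOf D P Q h T‖ ≤ s⁻¹ * ‖T‖ := by
  refine ContinuousLinearMap.opNorm_le_bound _ (mul_nonneg (inv_nonneg.mpr hs.1.le)
    (norm_nonneg T)) fun x => ?_
  calc ‖blockOf D P Q h T x‖ = ‖P.projection Q h (T x)‖ := by
        rw [← Submodule.norm_coe, coe_blockOf_apply]
    _ ≤ s⁻¹ * ‖T x‖ := norm_projection_le_inv_mul h hs hang (T x)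
    _ ≤ s⁻¹ * (‖T‖ * ‖x‖) := by
        rw [← Submodule.norm_coe x]
        exact mul_le_mul_of_nonneg_left (T.le_opNorm x) (inv_nonneg.mpr hs.1.le)
    _ = s⁻¹ * ‖T‖ * ‖x‖ := by ring

theorem norm_apply_le_norm_blockOf_add_norm_blockOf (D : Submodule ℝ V) {P Q : Submodule ℝ V}
    (h : IsCompl P Q) (T : V →L[ℝ] V) (x : D) :
    ‖T x‖ ≤ (‖blockOf D P Q h T‖ + ‖blockOf D Q P h.symm T‖) * ‖x‖ := by
  have hTx : T x = (blockOf D P Q h T x : V) + (blockOf D Q P h.symm T x : V) :=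
    (Submodule.projection_add_projection_eq_self h (T x)).symm
  calc ‖T x‖ ≤ ‖blockOf D P Q h T x‖ + ‖blockOf D Q P h.symm T x‖ := by
        rw [hTx, ← Submodule.norm_coe, ← Submodule.norm_coe (blockOf D Q P h.symm T x)]
        exact norm_add_le _ _
    _ ≤ ‖blockOf D P Q h T‖ * ‖x‖ + ‖blockOf D Q P h.symm T‖ * ‖x‖ :=
        add_le_add ((blockOf D P Q h T).le_opNorm x) ((blockOf D Q P h.symm T).le_opNorm x)
    _ = (‖blockOf D P Q h T‖ + ‖blockOf D Q P h.symm T‖) * ‖x‖ := by ring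

variable (E₀ F₀ E₁ F₁ : Submodule ℝ V) (h₁ : IsCompl E₁ F₁) (T : V →L[ℝ] V)

theorem norm_apply_le_two_mul_blockMaxNorm_of_mem_left (x : E₀) :
    ‖T x‖ ≤ 2 * blockMaxNorm E₀ F₀ E₁ F₁ h₁ T * ‖x‖ := by
  refine (norm_apply_le_norm_blockOf_add_norm_blockOf E₀ h₁ T x).trans ?_
  gcongr
  rw [two_mul]
  exact add_le_add (le_max_of_le_left (le_max_left _ _)) (le_max_of_le_right (le_max_left _ _))

theorem norm_apply_le_two_mul_blockMaxNorm_of_mem_right (x : F₀) :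
    ‖T x‖ ≤ 2 * blockMaxNorm E₀ F₀ E₁ F₁ h₁ T * ‖x‖ := by
  refine (norm_apply_le_norm_blockOf_add_norm_blockOf F₀ h₁ T x).trans ?_
  gcongr
  rw [two_mul]
  exact add_le_add (le_max_of_le_left (le_max_right _ _)) (le_max_of_le_right (le_max_right _ _))

theorem norm_le_four_mul_inv_mul_blockMaxNorm (h₀ : IsCompl E₀ F₀) {s₀ : ℝ}
    (hs₀ : s₀ ∈ Set.Ioc (0 : ℝ) 1)
    (hang₀ : ∀ e ∈ E₀, ∀ f ∈ F₀, e ≠ 0 → f ≠ 0 → s₀ ≤ Real.sin (angle e f)) :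
    ‖T‖ ≤ 4 * s₀⁻¹ * blockMaxNorm E₀ F₀ E₁ F₁ h₁ T := by
  set M := blockMaxNorm E₀ F₀ E₁ F₁ h₁ T
  have hM : 0 ≤ M :=
    (norm_nonneg (blockOf E₀ E₁ F₁ h₁ T)).trans (le_max_of_le_left (le_max_left _ _))
  refine ContinuousLinearMap.opNorm_le_bound _ (by have := hs₀.1; positivity) fun v => ?_
  set e := E₀.projectionOnto F₀ h₀ v
  set f := F₀.projectionOnto E₀ h₀.symm v
  have hv : (e : V) + f = v := Submodule.projection_add_projection_eq_self h₀ v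
  have he : ‖e‖ ≤ s₀⁻¹ * ‖v‖ := norm_projection_le_inv_mul h₀ hs₀ hang₀ v
  have hf : ‖f‖ ≤ s₀⁻¹ * ‖v‖ :=
    norm_projection_le_inv_mul h₀.symm hs₀ (sin_angle_ge_symm hang₀) v
  calc ‖T v‖ ≤ ‖T e‖ + ‖T f‖ := by rw [← hv, map_add]; exact norm_add_le _ _
    _ ≤ 2 * M * ‖e‖ + 2 * M * ‖f‖ :=
        add_le_add (norm_apply_le_two_mul_blockMaxNorm_of_mem_left E₀ F₀ E₁ F₁ h₁ T e)
          (norm_apply_le_two_mul_blockMaxNorm_of_mem_right E₀ F₀ E₁ F₁ h₁ T f)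
    _ ≤ 2 * M * (s₀⁻¹ * ‖v‖) + 2 * M * (s₀⁻¹ * ‖v‖) := by gcongr
    _ = 4 * s₀⁻¹ * M * ‖v‖ := by ring

theorem blockMaxNorm_le_inv_mul_norm {s₁ : ℝ} (hs₁ : s₁ ∈ Set.Ioc (0 : ℝ) 1)
    (hang₁ : ∀ e ∈ E₁, ∀ f ∈ F₁, e ≠ 0 → f ≠ 0 → s₁ ≤ Real.sin (angle e f)) :
    blockMaxNorm E₀ F₀ E₁ F₁ h₁ T ≤ s₁⁻¹ * ‖T‖ :=
  max_le (max_le (norm_blockOf_le_inv_mul E₀ h₁ hs₁ hang₁ T)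
      (norm_blockOf_le_inv_mul F₀ h₁ hs₁ hang₁ T))
    (max_le (norm_blockOf_le_inv_mul E₀ h₁.symm hs₁ (sin_angle_ge_symm hang₁) T)
      (norm_blockOf_le_inv_mul F₀ h₁.symm hs₁ (sin_angle_ge_symm hang₁) T))

end Blocks

theorem norm_le_blockMaxNorm_and_blockMaxNorm_le_norm_general
    {V : Type*} [NormedAddCommGroup V] [InnerProductSpace ℝ V] [FiniteDimensional ℝ V]
    (E₀ F₀ E₁ F₁ : Submodule ℝ V)
    (h₀ : IsCompl E₀ F₀) (h₁ : IsCompl E₁ F₁)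
    (T : V →L[ℝ] V) (s₀ s₁ : ℝ) (hs₀ : s₀ ∈ Set.Ioc (0 : ℝ) 1) (hs₁ : s₁ ∈ Set.Ioc (0 : ℝ) 1)
    (hang₀ : ∀ e ∈ E₀, ∀ f ∈ F₀, e ≠ 0 → f ≠ 0 → s₀ ≤ Real.sin (angle e f))
    (hang₁ : ∀ e ∈ E₁, ∀ f ∈ F₁, e ≠ 0 → f ≠ 0 → s₁ ≤ Real.sin (angle e f)) :
    ‖T‖ ≤ 4 * s₀⁻¹ * blockMaxNorm E₀ F₀ E₁ F₁ h₁ T ∧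
      blockMaxNorm E₀ F₀ E₁ F₁ h₁ T ≤ s₁⁻¹ * ‖T‖ :=
  ⟨norm_le_four_mul_inv_mul_blockMaxNorm E₀ F₀ E₁ F₁ h₁ T h₀ hs₀ hang₀,
    blockMaxNorm_le_inv_mul_norm E₀ F₀ E₁ F₁ h₁ T hs₁ hang₁⟩

theorem norm_le_blockMaxNorm_and_blockMaxNorm_le_norm
    {V : Type*} [NormedAddCommGroup V] [InnerProductSpace ℝ V] [FiniteDimensional ℝ V]
    (E₀ F₀ E₁ F₁ : Submodule ℝ V)
    (hE₀ : E₀ ≠ ⊥) (hF₀ : F₀ ≠ ⊥) (hE₁ : E₁ ≠ ⊥) (hF₁ : F₁ ≠ ⊥)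
    (h₀ : IsCompl E₀ F₀) (h₁ : IsCompl E₁ F₁)
    (T : V →L[ℝ] V) (s₀ s₁ : ℝ) (hs₀ : s₀ ∈ Set.Ioc (0 : ℝ) 1) (hs₁ : s₁ ∈ Set.Ioc (0 : ℝ) 1)
    (hang₀ : ∀ e ∈ E₀, ∀ f ∈ F₀, e ≠ 0 → f ≠ 0 → s₀ ≤ Real.sin (angle e f))
    (hang₁ : ∀ e ∈ E₁, ∀ f ∈ F₁, e ≠ 0 → f ≠ 0 → s₁ ≤ Real.sin (angle e f)) :
    ‖T‖ ≤ 4 * s₀⁻¹ * blockMaxNorm E₀ F₀ E₁ F₁ h₁ T ∧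
      blockMaxNorm E₀ F₀ E₁ F₁ h₁ T ≤ s₁⁻¹ * ‖T‖ :=
  norm_le_blockMaxNorm_and_blockMaxNorm_le_norm_general E₀ F₀ E₁ F₁ h₀ h₁ T s₀ s₁ hs₀ hs₁ hang₀
    hang₁
end

section
/- Let (X, μ) be a probability space and f : X → X a bimeasurable bijection preserving μ. Let C ⊆ X be a measurable set with μ(C) > 0 and set Γ = ⋃_{n∈ℤ} f^n(C). Fix γ > 0. Then for μ-almost every x ∈ Γ there exists N ∈ ℕ such that for every n ≥ N and every t ∈ (0,1) there exists ℓ ∈ {0,1,…,n} with t − γ ≤ ℓ/n ≤ t + γ and f^ℓ(x) ∈ C. -/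
/-!
For almost every point the frequency of visits to `C` converges: this is Birkhoff's ergodic
theorem for the indicator of `C`, derived from Garsia's maximal inequality. The inequality is
applied on the set of points whose orbit visits a set `E` of bad points infinitely often; that set
is invariant and, by Poincaré recurrence, contains almost all of `E`. The same inequality bounds
the measure of the points of `C` whose visit frequency tends to `0` by `ε μ(X)` for every `ε`, so
the limit is positive a.e. on `C`; being constant along orbits, it is positive a.e. on `Γ`.
Finally, if the counting function of a set of times is `L n + o(n)` with `L > 0`, the error is
uniformly `o(n)` on `[0, n]`, so every window of length `δ n` inside `[0, n]` contains a time of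
the set once `n` is large.
-/

open MeasureTheory Function Filter Topology

section BirkhoffSums

variable {α : Type*} {T : α → α} {g : α → ℝ}

/-- Garsia's recursive form of the running maximum `max (0, S₁ g x, …, S_N g x)` of the
Birkhoff sums. -/
noncomputable def maxBirkhoffSum (T : α → α) (g : α → ℝ) : ℕ → α → ℝ
  | 0 => 0
  | N + 1 => fun x => max 0 (g x + maxBirkhoffSum T g N (T x))

theorem maxBirkhoffSum_nonneg (N : ℕ) (x : α) : 0 ≤ maxBirkhoffSum T g N x := by
  cases N with
  | zero => rfl
  | succ N => exact le_max_left _ _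

theorem maxBirkhoffSum_le_succ (N : ℕ) (x : α) :
    maxBirkhoffSum T g N x ≤ maxBirkhoffSum T g (N + 1) x := by
  induction N generalizing x with
  | zero => exact maxBirkhoffSum_nonneg 1 x
  | succ N ih => exact max_le_max le_rfl (by gcongr; exact ih (T x))

theorem birkhoffSum_le_maxBirkhoffSum {n N : ℕ} (h : n ≤ N) (x : α) :
    birkhoffSum T g n x ≤ maxBirkhoffSum T g N x := by
  induction N generalizing n x with
  | zero => simp [Nat.le_zero.1 h, maxBirkhoffSum]
  | succ N ih =>
    cases n with
    | zero => simpa using maxBirkhoffSum_nonneg (N + 1) x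
    | succ n =>
      rw [birkhoffSum_succ']
      exact le_max_of_le_right (by gcongr; exact ih (Nat.le_of_succ_le_succ h) (T x))

theorem lt_birkhoffAverage_iff {c : ℝ} {n : ℕ} (hn : 0 < n) (x : α) :
    c < birkhoffAverage ℝ T g n x ↔ c * n < birkhoffSum T g n x := by
  rw [birkhoffAverage, smul_eq_mul, ← div_eq_inv_mul, lt_div_iff₀ (by exact_mod_cast hn)]

theorem frequently_lt_birkhoffAverage_of_iterate {c c' : ℝ} (hc : c' < c) {m : ℕ} {x : α}
    (h : ∃ᶠ n in atTop, c < birkhoffAverage ℝ T g n (T^[m] x)) :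
    ∃ᶠ n in atTop, c' < birkhoffAverage ℝ T g n x := by
  have hlarge : ∀ᶠ n : ℕ in atTop, c' * m - birkhoffSum T g m x < (c - c') * n ∧ 0 < n :=
    ((tendsto_natCast_atTop_atTop.const_mul_atTop (sub_pos.2 hc)).eventually_gt_atTop _).and
      (eventually_gt_atTop 0)
  refine (tendsto_add_atTop_nat m).frequently ((h.and_eventually hlarge).mono ?_)
  rintro n ⟨hn, hlt, hpos⟩
  rw [lt_birkhoffAverage_iff hpos] at hn
  rw [lt_birkhoffAverage_iff (by omega), add_comm, birkhoffSum_add]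
  push_cast
  linarith

theorem abs_birkhoffAverage_le {K : ℝ} (hgK : ∀ x, |g x| ≤ K) (n : ℕ) (x : α) :
    |birkhoffAverage ℝ T g n x| ≤ K := by
  rcases Nat.eq_zero_or_pos n with rfl | hn
  · simpa using (abs_nonneg _).trans (hgK x)
  have hn' : (0 : ℝ) < n := by exact_mod_cast hn
  have hsum : |birkhoffSum T g n x| ≤ n * K := by
    calc |birkhoffSum T g n x| ≤ ∑ k ∈ Finset.range n, |g (T^[k] x)| :=
          Finset.abs_sum_le_sum_abs _ _
      _ ≤ n * K := by
          simpa using Finset.sum_le_card_nsmul (Finset.range n) _ K fun k _ ↦ hgK (T^[k] x)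
  rw [birkhoffAverage, smul_eq_mul, abs_mul, abs_inv, Nat.abs_cast, inv_mul_le_iff₀ hn']
  exact hsum

theorem tendsto_birkhoffAverage_apply_iff {K : ℝ} (hgK : ∀ x, |g x| ≤ K) {x : α} {L : ℝ} :
    Tendsto (birkhoffAverage ℝ T g · (T x)) atTop (𝓝 L) ↔
      Tendsto (birkhoffAverage ℝ T g · x) atTop (𝓝 L) := by
  have hg : Bornology.IsBounded (Set.range g) :=
    isBounded_iff_forall_norm_le.2 ⟨K, Set.forall_mem_range.2 hgK⟩
  have hd := tendsto_birkhoffAverage_apply_sub_birkhoffAverage' ℝ hg T x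
  constructor
  · intro h
    simpa using h.sub hd
  · intro h
    simpa using h.add hd

theorem birkhoffAverage_indicator_one_eq_count_div (C : Set α) [DecidablePred (· ∈ C)] (n : ℕ)
    (x : α) :
    birkhoffAverage ℝ T (C.indicator (1 : α → ℝ)) n x =
      (Nat.count (fun k ↦ T^[k] x ∈ C) n : ℝ) / n := by
  rw [birkhoffAverage, smul_eq_mul, ← div_eq_inv_mul]
  congr 1
  induction n with
  | zero => simp
  | succ n ih => by_cases h : T^[n] x ∈ C <;> simp [birkhoffSum_succ, Nat.count_succ, ih, h]

theorem abs_indicator_one_le (C : Set α) (x : α) : |C.indicator (1 : α → ℝ) x| ≤ 1 := by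
  by_cases h : x ∈ C <;> simp [h]

theorem preimage_limsup_iterate_preimage (T : α → α) (E : Set α) :
    T ⁻¹' limsup (fun n ↦ T^[n] ⁻¹' E) atTop = limsup (fun n ↦ T^[n] ⁻¹' E) atTop := by
  ext x
  simp only [Set.mem_preimage, mem_limsup_iff_frequently_mem, ← iterate_succ_apply]
  conv_rhs => rw [← map_add_atTop_eq_nat 1, frequently_map]

end BirkhoffSums

section PointwiseErgodic

variable {α : Type*} [MeasurableSpace α] {μ : Measure α} {T : α → α} {g : α → ℝ}

theorem measurable_maxBirkhoffSum (hT : Measurable T) (hg : Measurable g) (N : ℕ) :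
    Measurable (maxBirkhoffSum T g N) := by
  induction N with
  | zero => exact measurable_const
  | succ N ih => exact measurable_const.max (hg.add (ih.comp hT))

theorem integrable_maxBirkhoffSum (hT : MeasurePreserving T μ μ) (hg : Integrable g μ) (N : ℕ) :
    Integrable (maxBirkhoffSum T g N) μ := by
  induction N with
  | zero => exact integrable_zero _ _ _
  | succ N ih => exact (integrable_zero _ _ _).sup (hg.add (hT.integrable_comp_of_integrable ih))

/-- Garsia's maximal inequality. -/
theorem setIntegral_nonneg_of_maxBirkhoffSum_pos (hT : MeasurePreserving T μ μ)
    (hg : Measurable g) (hgi : Integrable g μ) (N : ℕ) :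
    0 ≤ ∫ x in {x | 0 < maxBirkhoffSum T g (N + 1) x}, g x ∂μ := by
  set M := maxBirkhoffSum T g
  set P := {x | 0 < M (N + 1) x}
  have hMm := measurable_maxBirkhoffSum hT.measurable hg
  have hMi := integrable_maxBirkhoffSum hT hgi
  have hMT : Integrable (fun x ↦ M N (T x)) μ := hT.integrable_comp_of_integrable (hMi N)
  have hP : MeasurableSet P := measurableSet_lt measurable_const (hMm _)
  have hgP : ∀ x ∈ P, g x = M (N + 1) x - M N (T x) := fun x hx ↦ by
    have : M (N + 1) x = g x + M N (T x) := max_eq_right_iff.2 (not_lt.1 fun h ↦ by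
      simp only [P, Set.mem_ofPred_eq, M, maxBirkhoffSum, max_eq_left h.le, lt_irrefl] at hx)
    linarith
  have hMP : ∫ x in P, M (N + 1) x ∂μ = ∫ x, M (N + 1) x ∂μ :=
    setIntegral_eq_integral_of_forall_compl_eq_zero fun x hx ↦
      le_antisymm (not_lt.1 hx) (maxBirkhoffSum_nonneg _ x)
  calc 0 ≤ ∫ x, M (N + 1) x ∂μ - ∫ x, M N x ∂μ :=
        sub_nonneg.2 (integral_mono (hMi N) (hMi _) (maxBirkhoffSum_le_succ N))
    _ = ∫ x, M (N + 1) x ∂μ - ∫ x, M N (T x) ∂μ := by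
        rw [← integral_map hT.aemeasurable (hMm N).aestronglyMeasurable, hT.map_eq]
    _ ≤ ∫ x, M (N + 1) x ∂μ - ∫ x in P, M N (T x) ∂μ :=
        sub_le_sub_left (setIntegral_le_integral hMT
          (.of_forall fun x ↦ maxBirkhoffSum_nonneg N (T x))) _
    _ = ∫ x in P, g x ∂μ := by
        rw [setIntegral_congr_fun hP hgP, integral_sub (hMi _).integrableOn hMT.integrableOn, hMP]

theorem setIntegral_nonneg_of_exists_birkhoffSum_pos (hT : MeasurePreserving T μ μ)
    (hg : Measurable g) (hgi : Integrable g μ) {A : Set α} (hA : MeasurableSet A)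
    (hTA : T ⁻¹' A = A) (hpos : ∀ x ∈ A, ∃ n, 0 < birkhoffSum T g n x) :
    0 ≤ ∫ x in A, g x ∂μ := by
  have hTA' : MeasurePreserving T (μ.restrict A) (μ.restrict A) := by
    simpa only [hTA] using hT.restrict_preimage hA
  set s : ℕ → Set α := fun N ↦ {x | 0 < maxBirkhoffSum T g (N + 1) x}
  have hs : ∀ N, MeasurableSet (s N) := fun N ↦
    measurableSet_lt measurable_const (measurable_maxBirkhoffSum hT.measurable hg _)
  have hmono : Monotone s := monotone_nat_of_le_succ fun N x hx ↦
    hx.trans_le (maxBirkhoffSum_le_succ _ x)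
  have hAs : A ⊆ ⋃ N, s N := fun x hx ↦ by
    obtain ⟨n, hn⟩ := hpos x hx
    exact Set.mem_iUnion.2 ⟨n, hn.trans_le (birkhoffSum_le_maxBirkhoffSum n.le_succ x)⟩
  have hlim := tendsto_setIntegral_of_monotone (μ := μ.restrict A) hs hmono
    (hgi.restrict (s := A)).integrableOn
  rw [Measure.restrict_restrict (.iUnion hs), Set.inter_eq_self_of_subset_right hAs] at hlim
  exact ge_of_tendsto' hlim fun N ↦
    setIntegral_nonneg_of_maxBirkhoffSum_pos hTA' hg hgi.restrict N

theorem measurableSet_setOf_frequently {p : ℕ → α → Prop}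
    (hp : ∀ n, MeasurableSet {x | p n x}) :
    MeasurableSet {x | ∃ᶠ n in atTop, p n x} := by
  have : {x | ∃ᶠ n in atTop, p n x} = limsup (fun n ↦ {x | p n x}) atTop := by
    ext x
    exact mem_limsup_iff_frequently_mem.symm
  exact this ▸ MeasurableSet.measurableSet_limsup hp

theorem measurable_birkhoffAverage (hT : Measurable T) (hg : Measurable g) (n : ℕ) :
    Measurable (birkhoffAverage ℝ T g n) :=
  (Finset.measurable_sum (Finset.range n) fun k _ ↦ hg.comp (hT.iterate k)).const_smul
    ((n : ℝ)⁻¹)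

theorem ae_le_limsup_iterate_preimage [IsFiniteMeasure μ] (hT : MeasurePreserving T μ μ)
    {E : Set α} (hE : NullMeasurableSet E μ) :
    E ≤ᵐ[μ] (limsup (fun n ↦ T^[n] ⁻¹' E) atTop : Set α) := by
  filter_upwards [hT.conservative.ae_mem_imp_frequently_image_mem hE] with x hx hxE
  exact mem_limsup_iff_frequently_mem.2 (hx hxE)

theorem mul_measureReal_le_setIntegral_limsup [IsFiniteMeasure μ] (hT : MeasurePreserving T μ μ)
    (hg : Measurable g) (hgi : Integrable g μ) {E : Set α} (hE : MeasurableSet E) {c c' : ℝ}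
    (hc : c' < c) (hfreq : ∀ x ∈ E, ∃ᶠ n in atTop, c < birkhoffAverage ℝ T g n x) :
    c' * μ.real (limsup (fun n ↦ T^[n] ⁻¹' E) atTop) ≤
      ∫ x in limsup (fun n ↦ T^[n] ⁻¹' E) atTop, g x ∂μ := by
  set A := limsup (fun n ↦ T^[n] ⁻¹' E) atTop
  have hA : MeasurableSet A :=
    MeasurableSet.measurableSet_limsup fun n ↦ hE.preimage (hT.measurable.iterate n)
  have hpos : ∀ x ∈ A, ∃ n, 0 < birkhoffSum T (fun y ↦ g y - c') n x := fun x hx ↦ by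
    obtain ⟨m, hm⟩ := (mem_limsup_iff_frequently_mem.1 hx).exists
    obtain ⟨n, hn, hn0⟩ := ((frequently_lt_birkhoffAverage_of_iterate hc
      (hfreq _ hm)).and_eventually (eventually_gt_atTop 0)).exists
    refine ⟨n, ?_⟩
    have := (lt_birkhoffAverage_iff hn0 x).1 hn
    simp only [birkhoffSum, Finset.sum_sub_distrib, Finset.sum_const, Finset.card_range,
      nsmul_eq_mul] at this ⊢
    linarith
  have := setIntegral_nonneg_of_exists_birkhoffSum_pos hT (hg.sub measurable_const)
    (hgi.sub (integrable_const c')) hA (preimage_limsup_iterate_preimage T E) hpos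
  simp only [Pi.sub_apply] at this
  rw [integral_sub hgi.integrableOn (integrable_const c'), setIntegral_const, smul_eq_mul] at this
  linarith

theorem setIntegral_limsup_le_mul_measureReal [IsFiniteMeasure μ] (hT : MeasurePreserving T μ μ)
    (hg : Measurable g) (hgi : Integrable g μ) {E : Set α} (hE : MeasurableSet E) {c c' : ℝ}
    (hc : c < c') (hfreq : ∀ x ∈ E, ∃ᶠ n in atTop, birkhoffAverage ℝ T g n x < c) :
    ∫ x in limsup (fun n ↦ T^[n] ⁻¹' E) atTop, g x ∂μ ≤
      c' * μ.real (limsup (fun n ↦ T^[n] ⁻¹' E) atTop) := by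
  have := mul_measureReal_le_setIntegral_limsup hT hg.neg hgi.neg hE (neg_lt_neg hc)
    fun x hx ↦ (hfreq x hx).mono fun n hn ↦ by
      simpa [birkhoffAverage_neg] using neg_lt_neg hn
  rw [← neg_le_neg_iff]
  simpa [integral_neg] using this

theorem measure_frequently_lt_frequently_gt_birkhoffAverage_eq_zero [IsFiniteMeasure μ]
    (hT : MeasurePreserving T μ μ) (hg : Measurable g) (hgi : Integrable g μ) {a b : ℝ}
    (hab : a < b) :
    μ {x | (∃ᶠ n in atTop, birkhoffAverage ℝ T g n x < a) ∧
      ∃ᶠ n in atTop, b < birkhoffAverage ℝ T g n x} = 0 := by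
  set E := {x | (∃ᶠ n in atTop, birkhoffAverage ℝ T g n x < a) ∧
    ∃ᶠ n in atTop, b < birkhoffAverage ℝ T g n x}
  have havg := measurable_birkhoffAverage hT.measurable hg
  have hE : MeasurableSet E :=
    (measurableSet_setOf_frequently fun n ↦ measurableSet_lt (havg n) measurable_const).inter
      (measurableSet_setOf_frequently fun n ↦ measurableSet_lt measurable_const (havg n))
  set A := limsup (fun n ↦ T^[n] ⁻¹' E) atTop
  have hlow := mul_measureReal_le_setIntegral_limsup hT hg hgi hE
    (show (a + 2 * b) / 3 < b by linarith) fun x hx ↦ hx.2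
  have hup := setIntegral_limsup_le_mul_measureReal hT hg hgi hE
    (show a < (2 * a + b) / 3 by linarith) fun x hx ↦ hx.1
  have hA : μ A = 0 := (measureReal_eq_zero_iff (measure_ne_top μ A)).1
    (by nlinarith [measureReal_nonneg (μ := μ) (s := A)])
  exact measure_mono_null_ae (ae_le_limsup_iterate_preimage hT hE.nullMeasurableSet) hA

theorem ae_exists_tendsto_birkhoffAverage [IsFiniteMeasure μ] (hT : MeasurePreserving T μ μ)
    (hg : Measurable g) {K : ℝ} (hgK : ∀ x, |g x| ≤ K) :
    ∀ᵐ x ∂μ, ∃ L, Tendsto (birkhoffAverage ℝ T g · x) atTop (𝓝 L) := by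
  have hgi : Integrable g μ := .of_bound hg.aestronglyMeasurable K (.of_forall hgK)
  have hnull : ∀ a b : ℚ, ∀ᵐ x ∂μ, (a : ℝ) < b → ¬((∃ᶠ n in atTop,
      birkhoffAverage ℝ T g n x < a) ∧ ∃ᶠ n in atTop, b < birkhoffAverage ℝ T g n x) := by
    intro a b
    by_cases hab : (a : ℝ) < b
    · filter_upwards [measure_eq_zero_iff_ae_notMem.1
        (measure_frequently_lt_frequently_gt_birkhoffAverage_eq_zero hT hg hgi hab)]
        with x hx _ using hx
    · exact .of_forall fun x h ↦ absurd h hab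
  filter_upwards [ae_all_iff.2 fun a ↦ ae_all_iff.2 (hnull a)] with x hx
  have hbdd n := abs_le.1 (abs_birkhoffAverage_le (T := T) hgK n x)
  exact tendsto_of_no_upcrossings Rat.denseRange_cast
    (by rintro _ ⟨a, rfl⟩ _ ⟨b, rfl⟩; exact hx a b)
    (isBoundedUnder_of ⟨K, fun n ↦ (hbdd n).2⟩) (isBoundedUnder_of ⟨-K, fun n ↦ (hbdd n).1⟩)

theorem ae_not_tendsto_birkhoffAverage_indicator_zero [IsFiniteMeasure μ]
    (hT : MeasurePreserving T μ μ) {C : Set α} (hC : MeasurableSet C) :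
    ∀ᵐ x ∂μ, x ∈ C →
      ¬Tendsto (birkhoffAverage ℝ T (C.indicator (1 : α → ℝ)) · x) atTop (𝓝 0) := by
  have hg : Measurable (C.indicator (1 : α → ℝ)) := measurable_one.indicator hC
  have hgi : Integrable (C.indicator (1 : α → ℝ)) μ := (integrable_const 1).indicator hC
  set Z :=
    {x | x ∈ C ∧ Tendsto (birkhoffAverage ℝ T (C.indicator (1 : α → ℝ)) · x) atTop (𝓝 0)}
  have hsmall : ∀ ε > 0, μ.real Z ≤ 2 * ε * μ.real Set.univ := by
    intro ε hε
    set E := C ∩ {x | ∃ᶠ n in atTop, birkhoffAverage ℝ T (C.indicator (1 : α → ℝ)) n x < ε}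
    have hE : MeasurableSet E := hC.inter <| measurableSet_setOf_frequently fun n ↦
      measurableSet_lt (measurable_birkhoffAverage hT.measurable hg n) measurable_const
    set A := limsup (fun n ↦ T^[n] ⁻¹' E) atTop
    have hup := setIntegral_limsup_le_mul_measureReal hT hg hgi hE (by linarith : ε < 2 * ε)
      fun x hx ↦ hx.2
    rw [integral_indicator_one hC, measureReal_restrict_apply hC] at hup
    have hZE : Z ⊆ E := fun x hx ↦
      ⟨hx.1, by exact (hx.2.eventually (gt_mem_nhds hε)).frequently⟩
    have hZA : Z ≤ᵐ[μ] (C ∩ A : Set α) :=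
      (ae_le_limsup_iterate_preimage hT hE.nullMeasurableSet).mono
        fun x hx hxZ ↦ ⟨(hZE hxZ).1, hx (hZE hxZ)⟩
    calc μ.real Z ≤ μ.real (C ∩ A) :=
          ENNReal.toReal_mono (measure_ne_top μ _) (measure_mono_ae hZA)
      _ ≤ 2 * ε * μ.real A := hup
      _ ≤ 2 * ε * μ.real Set.univ := by gcongr; exacts [measure_ne_top μ _, Set.subset_univ A]
  have hZ : μ.real Z ≤ 0 := by
    have h := (tendsto_one_div_add_atTop_nhds_zero_nat.const_mul 2).mul_const (μ.real Set.univ)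
    rw [mul_zero, zero_mul] at h
    exact ge_of_tendsto' h fun k ↦ hsmall _ Nat.one_div_pos_of_nat
  have hZ0 : μ Z = 0 :=
    (measureReal_eq_zero_iff (measure_ne_top μ Z)).1 (le_antisymm hZ measureReal_nonneg)
  filter_upwards [measure_eq_zero_iff_ae_notMem.1 hZ0] with x hx hxC hlim using hx ⟨hxC, hlim⟩

theorem ae_exists_pos_tendsto_birkhoffAverage_indicator [IsFiniteMeasure μ]
    (hT : MeasurePreserving T μ μ) {C : Set α} (hC : MeasurableSet C) :
    ∀ᵐ x ∂μ, x ∈ C →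
      ∃ L > 0, Tendsto (birkhoffAverage ℝ T (C.indicator (1 : α → ℝ)) · x) atTop (𝓝 L) := by
  classical
  filter_upwards [ae_exists_tendsto_birkhoffAverage hT (measurable_one.indicator hC)
    (abs_indicator_one_le C), ae_not_tendsto_birkhoffAverage_indicator_zero hT hC]
    with x ⟨L, hL⟩ hx0 hxC
  have hL0 : 0 ≤ L := ge_of_tendsto' hL fun n ↦ by
    rw [birkhoffAverage_indicator_one_eq_count_div]
    positivity
  exact ⟨L, hL0.lt_of_ne fun h ↦ hx0 hxC (h ▸ hL), hL⟩

end PointwiseErgodic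

section Density

theorem exists_abs_sub_mul_le_of_tendsto_div {u : ℕ → ℝ} {L : ℝ}
    (hu : Tendsto (fun n ↦ u n / n) atTop (𝓝 L)) {ε : ℝ} (hε : 0 < ε) :
    ∃ B, ∀ m : ℕ, |u m - L * m| ≤ ε * m + B := by
  obtain ⟨N, hN⟩ := Metric.tendsto_atTop.1 hu ε hε
  -- `B` absorbs the finitely many indices before the tail estimate applies.
  refine ⟨∑ m ∈ Finset.range (N + 1), |u m - L * m|, fun m ↦ ?_⟩
  have hB : 0 ≤ ∑ m ∈ Finset.range (N + 1), |u m - L * m| :=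
    Finset.sum_nonneg fun _ _ ↦ abs_nonneg _
  rcases lt_or_ge m (N + 1) with hm | hm
  · have := Finset.single_le_sum (fun k _ ↦ abs_nonneg (u k - L * k))
      (Finset.mem_range.2 hm)
    nlinarith [Nat.cast_nonneg (α := ℝ) m]
  · have hm0 : (0 : ℝ) < m := by exact_mod_cast (Nat.succ_pos N).trans_le hm
    have hdist := hN m (by omega)
    rw [Real.dist_eq] at hdist
    have : u m - L * m = m * (u m / m - L) := by field_simp
    rw [this, abs_mul, Nat.abs_cast]
    nlinarith

theorem Nat.eventually_exists_count_window {p : ℕ → Prop} [DecidablePred p] {L : ℝ}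
    (hL : Tendsto (fun n ↦ (Nat.count p n : ℝ) / n) atTop (𝓝 L)) (hL0 : 0 < L) {δ : ℝ}
    (hδ : 0 < δ) :
    ∀ᶠ n : ℕ in atTop, ∀ lo hi : ℝ, 0 ≤ lo → hi ≤ 1 → lo + δ ≤ hi →
      ∃ ℓ ≤ n, p ℓ ∧ lo ≤ (ℓ : ℝ) / n ∧ (ℓ : ℝ) / n ≤ hi := by
  obtain ⟨B, hB⟩ := exists_abs_sub_mul_le_of_tendsto_div hL (ε := L * δ / 4) (by positivity)
  filter_upwards [eventually_gt_atTop 0, tendsto_natCast_atTop_atTop.eventually_gt_atTop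
    ((4 * B + 2 * L + L * δ) / (L * δ))] with n hn hnB lo hi hlo hhi hlohi
  have hn' : (0 : ℝ) < n := by exact_mod_cast hn
  have hLδn : 4 * B + 2 * L + L * δ < L * δ * n := (div_lt_iff₀' (by positivity)).1 hnB
  set a := ⌈lo * n⌉₊
  set b := ⌊hi * n⌋₊ + 1
  have hlo1 : lo * n ≤ n := mul_le_of_le_one_left hn'.le (by linarith)
  have hhi1 : hi * n ≤ n := mul_le_of_le_one_left hn'.le hhi
  have ha : lo * n ≤ a := Nat.le_ceil _
  have ha' : (a : ℝ) < lo * n + 1 := Nat.ceil_lt_add_one (by positivity)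
  have hb : hi * n < b := by simpa [b] using Nat.lt_floor_add_one (hi * n)
  have hb' : (b : ℝ) ≤ hi * n + 1 := by
    simpa [b] using Nat.floor_le (a := hi * n) (by nlinarith)
  have hcount : Nat.count p a < Nat.count p b := by
    have h1 := abs_le.1 (hB a)
    have h2 := abs_le.1 (hB b)
    have hgap : L * (δ * n - 1) < L * (b - a) := mul_lt_mul_of_pos_left (by nlinarith) hL0
    have hsum : L * δ / 4 * (a + b) ≤ L * δ / 4 * (2 * n + 2) :=
      mul_le_mul_of_nonneg_left (by linarith) (by positivity)
    exact_mod_cast (show (Nat.count p a : ℝ) < Nat.count p b by nlinarith)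
  obtain ⟨ℓ, ⟨hℓa, hℓb⟩, hpℓ⟩ := Nat.exists_of_count_lt_count hcount
  have hℓ : (ℓ : ℝ) ≤ hi * n := (Nat.cast_le.2 (Nat.lt_succ_iff.1 hℓb)).trans
    (Nat.floor_le (by nlinarith))
  refine ⟨ℓ, by exact_mod_cast hℓ.trans hhi1, hpℓ, ?_, (div_le_iff₀ hn').2 hℓ⟩
  exact (le_div_iff₀ hn').2 (ha.trans (by exact_mod_cast hℓa))

end Density

section Permutation

variable {X : Type*}

theorem Equiv.Perm.zpow_apply_iff_of_forall_apply_iff (f : Equiv.Perm X) {p : X → Prop}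
    (hp : ∀ x, p (f x) ↔ p x) (m : ℤ) (x : X) : p ((f ^ m) x) ↔ p x := by
  induction m using Int.induction_on generalizing x with
  | zero => rfl
  | succ k ih => rw [zpow_add_one, Equiv.Perm.mul_apply, ih, hp]
  | pred k ih =>
    rw [sub_eq_add_neg, zpow_add, zpow_neg_one, Equiv.Perm.mul_apply, ih, ← hp,
      Equiv.Perm.coe_inv, Equiv.apply_symm_apply]

theorem measurePreserving_zpow [MeasurableSpace X] {μ : Measure X} {f : Equiv.Perm X}
    (hf' : Measurable f.symm) (hμ : MeasurePreserving f μ μ) (m : ℤ) :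
    MeasurePreserving ⇑(f ^ m) μ μ := by
  have hinv : MeasurePreserving ⇑f⁻¹ μ μ := hμ.symm ⟨f, hμ.measurable, hf'⟩
  induction m using Int.induction_on with
  | zero => exact .id μ
  | succ k ih => rw [zpow_add_one, Equiv.Perm.coe_mul]; exact ih.comp hμ
  | pred k ih =>
    rw [sub_eq_add_neg, zpow_add, zpow_neg_one, Equiv.Perm.coe_mul]
    exact ih.comp hinv

end Permutation

theorem recurrence_with_prescribed_frequency_general
    {X : Type*} [MeasurableSpace X] (μ : Measure X) [IsProbabilityMeasure μ]
    (f : X ≃ X) (hf' : Measurable f.symm)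
    (hμ : MeasurePreserving f μ μ)
    (C : Set X) (hC : MeasurableSet C)
    (γ : ℝ) (hγ : 0 < γ) :
    ∀ᵐ x ∂μ, x ∈ (⋃ n : ℤ, ⇑(f ^ n) '' C) →
      ∃ N : ℕ, ∀ n : ℕ, N ≤ n → ∀ t ∈ Set.Ioo (0 : ℝ) 1,
        ∃ ℓ : ℕ, ℓ ≤ n ∧ t - γ ≤ (ℓ : ℝ) / (n : ℝ) ∧ (ℓ : ℝ) / (n : ℝ) ≤ t + γ ∧
          (⇑f)^[ℓ] x ∈ C := by
  classical
  set P : X → Prop := fun y ↦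
    ∃ L > 0, Tendsto (birkhoffAverage ℝ f (C.indicator (1 : X → ℝ)) · y) atTop (𝓝 L)
  have hP : ∀ y, P (f y) ↔ P y := fun y ↦ exists_congr fun L ↦ and_congr_right fun _ ↦
    tendsto_birkhoffAverage_apply_iff (abs_indicator_one_le C)
  have hPC := ae_exists_pos_tendsto_birkhoffAverage_indicator hμ hC
  filter_upwards [ae_all_iff.2 fun m : ℤ ↦
    (measurePreserving_zpow hf' hμ m).quasiMeasurePreserving.ae hPC] with x hx hxΓ
  obtain ⟨m, y, hyC, rfl⟩ := Set.mem_iUnion.1 hxΓ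
  have hy : (f ^ (-m)) ((f ^ m) y) = y := by
    rw [← Equiv.Perm.mul_apply, ← zpow_add, neg_add_cancel, zpow_zero, Equiv.Perm.one_apply]
  have hPy : P y := by simpa only [hy] using hx (-m) (by rwa [hy])
  obtain ⟨L, hL0, hL⟩ := (Equiv.Perm.zpow_apply_iff_of_forall_apply_iff f hP m y).2 hPy
  simp only [birkhoffAverage_indicator_one_eq_count_div] at hL
  obtain ⟨N, hN⟩ := eventually_atTop.1 (Nat.eventually_exists_count_window hL hL0
    (lt_min hγ one_pos))
  refine ⟨N, fun n hn t ht ↦ ?_⟩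
  obtain ⟨ht0, ht1⟩ := ht
  have hwindow : max 0 (t - γ) + min γ 1 ≤ min 1 (t + γ) := by
    have := min_le_left γ 1
    have := min_le_right γ 1
    refine le_min ?_ ?_ <;> rcases max_cases 0 (t - γ) with ⟨h, _⟩ | ⟨h, _⟩ <;> rw [h] <;> linarith
  obtain ⟨ℓ, hℓn, hℓC, hlo, hhi⟩ := hN n hn _ _ (le_max_left _ _) (min_le_left _ _) hwindow
  exact ⟨ℓ, hℓn, (le_max_right _ _).trans hlo, hhi.trans (min_le_right _ _), hℓC⟩

theorem recurrence_with_prescribed_frequency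
    {X : Type*} [MeasurableSpace X] (μ : Measure X) [IsProbabilityMeasure μ]
    (f : X ≃ X) (hf : Measurable f) (hf' : Measurable f.symm)
    (hμ : MeasurePreserving f μ μ)
    (C : Set X) (hC : MeasurableSet C) (hCpos : 0 < μ C)
    (γ : ℝ) (hγ : 0 < γ) :
    ∀ᵐ x ∂μ, x ∈ (⋃ n : ℤ, ⇑(f ^ n) '' C) →
      ∃ N : ℕ, ∀ n : ℕ, N ≤ n → ∀ t ∈ Set.Ioo (0 : ℝ) 1,
        ∃ ℓ : ℕ, ℓ ≤ n ∧ t - γ ≤ (ℓ : ℝ) / (n : ℝ) ∧ (ℓ : ℝ) / (n : ℝ) ≤ t + γ ∧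
          (⇑f)^[ℓ] x ∈ C :=
  recurrence_with_prescribed_frequency_general μ f hf' hμ C hC γ hγ
end

section
/- Let V be a d-dimensional real vector space, let 1 ≤ p ≤ d, and let e = (e₁,…,e_d) and e' = (e'₁,…,e'_d) be two bases of V. Let E = span(e₁,…,e_p) and F' = span(e'_{p+1},…,e'_d). Let L : V → V be a linear map such that L(v₀) ∈ F' for some nonzero vector v₀ ∈ E. Then the induced linear map ⋀^p L on the p-th exterior power ⋀^p V sends the vector e₁ ∧ ⋯ ∧ e_p into the subspace H' of ⋀^p V spanned by the wedges e'_{i₁} ∧ ⋯ ∧ e'_{i_p} over all strictly increasing index tuples 1 ≤ i₁ < ⋯ < i_p ≤ d with i_p > p (i.e., all basis wedges of e' different from e'₁ ∧ ⋯ ∧ e'_p). -/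
/-!
Write `v₀ = ∑_{i < p} cᵢ eᵢ` and pick `j` with `c_j ≠ 0`. Replacing `e_j` by `v₀` in
`e₁ ∧ ⋯ ∧ e_p` multiplies the wedge by `c_j`, so `⋀^p L (e₁ ∧ ⋯ ∧ e_p)` is a multiple of a wedge
with the factor `L v₀ ∈ F'`. Expanding every factor in the basis `e'`, each surviving term is,
up to sign, a sorted basis wedge containing some `e'_i` with `i > p`.
-/

open Submodule

namespace AlternatingMap

variable {R M N : Type*} [CommRing R] [AddCommMonoid M] [Module R M] [AddCommGroup N] [Module R N]

theorem map_update_sum_smul {ι : Type*} [Fintype ι] [DecidableEq ι] (f : M [⋀^ι]→ₗ[R] N)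
    (v : ι → M) (j : ι) (c : ι → R) :
    f (Function.update v j (∑ i, c i • v i)) = c j • f v := by
  rw [map_update_sum, Finset.sum_eq_single_of_mem j (Finset.mem_univ j)]
  · rw [map_update_smul, Function.update_eq_self]
  · intro i _ hij
    rw [map_update_smul, map_update_self _ _ hij.symm, smul_zero]

theorem map_comp_mem_span_strictMono {α : Type*} [LinearOrder α] {n : ℕ}
    (f : M [⋀^Fin n]→ₗ[R] N) (v : α → M) (T : Set α) (r : Fin n → α) (hr : ∃ j, r j ∈ T) :
    f (v ∘ r) ∈ span R {w | ∃ ι : Fin n → α, StrictMono ι ∧ (∃ j, ι j ∈ T) ∧ w = f (v ∘ ι)} := by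
  by_cases hinj : Function.Injective r
  · set σ := Tuple.sort r
    have hsorted : StrictMono (r ∘ σ) :=
      (Tuple.monotone_sort r).strictMono_of_injective (hinj.comp σ.injective)
    obtain ⟨j, hj⟩ := hr
    have hperm : f (v ∘ r) = Equiv.Perm.sign σ.symm • f (v ∘ (r ∘ σ)) := by
      rw [← map_perm]; congr 1; ext i; simp
    rw [hperm, Units.smul_def]
    refine zsmul_mem (subset_span ?_) _
    exact ⟨r ∘ σ, hsorted, ⟨σ.symm j, by simpa using hj⟩, rfl⟩
  · rw [map_eq_zero_of_not_injective _ _ fun h => hinj h.of_comp]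
    exact zero_mem _

theorem map_mem_span_of_mem_span_image {α : Type*} [LinearOrder α] [Fintype α] {n : ℕ}
    (f : M [⋀^Fin n]→ₗ[R] N) (b : Module.Basis α R M) (T : Set α) (v : Fin n → M) (j : Fin n)
    (hv : v j ∈ span R (b '' T)) :
    f v ∈ span R {w | ∃ ι : Fin n → α, StrictMono ι ∧ (∃ j, ι j ∈ T) ∧ w = f (b ∘ ι)} := by
  have hexpand : f v = ∑ r : Fin n → α, (∏ i, b.repr (v i) (r i)) • f (b ∘ r) := by
    calc f v = f (fun i => ∑ k, b.repr (v i) k • b k) := by simp only [b.sum_repr]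
      _ = ∑ r : Fin n → α, f (fun i => b.repr (v i) (r i) • b (r i)) :=
        f.toMultilinearMap.map_sum _
      _ = _ := by simp only [map_smul_univ]; rfl
  rw [hexpand]
  refine sum_mem fun r _ => ?_
  by_cases hr : r j ∈ T
  · exact smul_mem _ _ (map_comp_mem_span_strictMono f b T r ⟨j, hr⟩)
  · have hcoeff : b.repr (v j) (r j) = 0 := by
      by_contra h
      exact hr ((b.mem_span_image.1 hv) (Finsupp.mem_support_iff.2 h))
    rw [Finset.prod_eq_zero (Finset.mem_univ j) hcoeff, zero_smul]
    exact zero_mem _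

end AlternatingMap

open ExteriorAlgebra in
theorem exteriorPower_map_wedge_mem_span_general
    {V : Type*} [AddCommGroup V] [Module ℝ V] (d p : ℕ) (hpd : p ≤ d)
    (e e' : Module.Basis (Fin d) ℝ V) (L : V →ₗ[ℝ] V)
    (v₀ : V) (hv₀ : v₀ ≠ 0)
    (hv₀E : v₀ ∈ Submodule.span ℝ (e '' {i : Fin d | (i : ℕ) < p}))
    (hLv₀ : L v₀ ∈ Submodule.span ℝ (e' '' {i : Fin d | p ≤ (i : ℕ)})) :
    ExteriorAlgebra.map L
        (ExteriorAlgebra.ιMulti ℝ p (fun j : Fin p => e (Fin.castLE hpd j)))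
      ∈ Submodule.span ℝ
          {w : ExteriorAlgebra ℝ V |
            ∃ ι : Fin p → Fin d, StrictMono ι ∧ (∃ j : Fin p, p ≤ ((ι j : Fin d) : ℕ)) ∧
              w = ExteriorAlgebra.ιMulti ℝ p (fun j => e' (ι j))} := by
  classical
  set base : Fin p → V := fun j => e (Fin.castLE hpd j)
  have hrange : Set.range base = e '' {i | (i : ℕ) < p} := by
    rw [← Fin.range_castLE hpd, ← Set.range_comp]; rfl
  obtain ⟨c, hc⟩ := (mem_span_range_iff_exists_fun ℝ).1 (hrange ▸ hv₀E)
  obtain ⟨j, hj⟩ : ∃ j, c j ≠ 0 := by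
    by_contra! h
    exact hv₀ (by simp [← hc, h])
  have hwedge : ιMulti ℝ p (Function.update base j v₀) = c j • ιMulti ℝ p base := by
    rw [← hc, AlternatingMap.map_update_sum_smul]
  have hmap : map L (ιMulti ℝ p base) = (c j)⁻¹ • ιMulti ℝ p (L ∘ Function.update base j v₀) := by
    rw [← map_apply_ιMulti, hwedge, map_smul, inv_smul_smul₀ hj]
  have hslot : (L ∘ Function.update base j v₀) j ∈ span ℝ (e' '' {i | p ≤ (i : ℕ)}) := by
    simpa using hLv₀
  rw [hmap]
  have hmem := AlternatingMap.map_mem_span_of_mem_span_image (ιMulti ℝ p) e' _ _ j hslot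
  exact smul_mem _ (c j)⁻¹ hmem

theorem exteriorPower_map_wedge_mem_span
    {V : Type*} [AddCommGroup V] [Module ℝ V] (d p : ℕ) (hp : 1 ≤ p) (hpd : p ≤ d)
    (e e' : Module.Basis (Fin d) ℝ V) (L : V →ₗ[ℝ] V)
    (v₀ : V) (hv₀ : v₀ ≠ 0)
    (hv₀E : v₀ ∈ Submodule.span ℝ (e '' {i : Fin d | (i : ℕ) < p}))
    (hLv₀ : L v₀ ∈ Submodule.span ℝ (e' '' {i : Fin d | p ≤ (i : ℕ)})) :
    ExteriorAlgebra.map L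
        (ExteriorAlgebra.ιMulti ℝ p (fun j : Fin p => e (Fin.castLE hpd j)))
      ∈ Submodule.span ℝ
          {w : ExteriorAlgebra ℝ V |
            ∃ ι : Fin p → Fin d, StrictMono ι ∧ (∃ j : Fin p, p ≤ ((ι j : Fin d) : ℕ)) ∧
              w = ExteriorAlgebra.ιMulti ℝ p (fun j => e' (ι j))} :=
  exteriorPower_map_wedge_mem_span_general d p hpd e e' L v₀ hv₀ hv₀E hLv₀
end

section
/- Let X be a compact metric space, f : X → X a homeomorphism, and A : X → M_d(ℝ) a continuous map into the d×d real matrices. Let x ∈ X be a nonperiodic point of f (f^k(x) ≠ x for all k ≥ 1), let n ≥ 1 be an integer, let ε ∈ (0,1), and let L₀,…,L_{n−1} ∈ M_d(ℝ) satisfy ‖L_i − A(f^i(x))‖ < ε/2 for each 0 ≤ i ≤ n−1. Then there exists an open set U containing x, with f^i(U) (0 ≤ i ≤ n−1) pairwise disjoint, such that for every open set V ⊆ U and every compact set K ⊆ V there exists a continuous map B : X → M_d(ℝ) satisfying: (1) ‖A(y) − B(y)‖ < ε for every y ∈ X; (2) B(y) = L_i for every y ∈ f^i(K) and every 0 ≤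 i ≤ n−1; (3) B(y) = A(y) for every y ∈ X ∖ ⋃_{i=0}^{n−1} f^i(V). -/
/-!
Since `x` is not periodic, the points `f^i x` (`i < n`) are distinct, so they have
pairwise disjoint neighbourhoods on which `A` is within `ε / 2` of `A (f^i x)`; pulling
these back by `f^i` and intersecting gives `U`. For `K ⊆ V ⊆ U`, Urysohn functions `φᵢ`
equal to `1` on `f^i K` and `0` off `f^i V` give `B = A + ∑ᵢ φᵢ • (Lᵢ - A)`; on each floor
`f^i V` only one term survives, and there `‖Lᵢ - A‖ < ε`.
-/

open Function Set

theorem IsOpenMap.iterate {X : Type*} [TopologicalSpace X] {f : X → X} (hf : IsOpenMap f)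
    (n : ℕ) : IsOpenMap f^[n] := by
  induction n with
  | zero => exact IsOpenMap.id
  | succ k ih => rw [iterate_succ]; exact ih.comp hf

theorem Function.Injective.iterate_apply_injective {α : Type*} {f : α → α} (hf : Injective f)
    {x : α} (hx : x ∉ periodicPts f) : Injective (f^[·] x) := by
  intro m n h
  by_contra hne
  rcases lt_or_gt_of_ne hne with hlt | hlt
  · exact hx (mk_mem_periodicPts (by omega) (iterate_cancel hf h.symm))
  · exact hx (mk_mem_periodicPts (by omega) (iterate_cancel hf h))

theorem exists_isOpen_iterate_image_subset_pairwiseDisjoint {X : Type*} [TopologicalSpace X]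
    [T2Space X] {f : X → X} (hf : Continuous f) {x : X} {n : ℕ}
    (hinj : (Iio n).InjOn (f^[·] x)) {W : ℕ → Set X} (hW : ∀ i < n, IsOpen (W i))
    (hxW : ∀ i < n, f^[i] x ∈ W i) :
    ∃ U : Set X, IsOpen U ∧ x ∈ U ∧ (∀ i < n, f^[i] '' U ⊆ W i) ∧
      (Iio n).PairwiseDisjoint (f^[·] '' U) := by
  obtain ⟨N, hN, hNdisj⟩ := ((finite_Iio n).image (f^[·] x)).t2_separation
  set U := ⋂ i ∈ Finset.range n, f^[i] ⁻¹' (W i ∩ N (f^[i] x))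
  have hUW : ∀ i < n, f^[i] '' U ⊆ W i ∩ N (f^[i] x) := fun i hi =>
    image_subset_iff.2 (biInter_subset_of_mem (Finset.mem_range.2 hi))
  refine ⟨U, ?_, ?_, fun i hi => (hUW i hi).trans inter_subset_left, ?_⟩
  · exact isOpen_biInter_finset fun i hi =>
      ((hW i (Finset.mem_range.1 hi)).inter (hN _).2).preimage (hf.iterate i)
  · simp only [U, mem_iInter, mem_preimage]
    exact fun i hi => ⟨hxW i (Finset.mem_range.1 hi), (hN _).1⟩
  · intro i hi j hj hij
    exact (hNdisj (mem_image_of_mem _ hi) (mem_image_of_mem _ hj) (hinj.ne hi hj hij)).mono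
      ((hUW i hi).trans inter_subset_right) ((hUW j hj).trans inter_subset_right)

theorem exists_continuous_perturbation_of_pairwiseDisjoint {X E ι : Type*}
    [TopologicalSpace X] [NormalSpace X] [NormedAddCommGroup E] [NormedSpace ℝ E]
    {A : X → E} (hA : Continuous A)
    {s : Finset ι} {V K : ι → Set X} {L : ι → E} {ε : ℝ} (hε : 0 < ε)
    (hV : ∀ i, IsOpen (V i)) (hK : ∀ i, IsClosed (K i)) (hKV : ∀ i, K i ⊆ V i)
    (hdisj : (s : Set ι).PairwiseDisjoint V) (hL : ∀ i ∈ s, ∀ y ∈ V i, ‖L i - A y‖ < ε) :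
    ∃ B : X → E, Continuous B ∧ (∀ y, ‖A y - B y‖ < ε) ∧ (∀ i ∈ s, ∀ y ∈ K i, B y = L i) ∧
      ∀ y, y ∉ ⋃ i ∈ s, V i → B y = A y := by
  choose φ hφ0 hφ1 hφ01 using fun i =>
    exists_continuous_zero_one_of_isClosed (hV i).isClosed_compl (hK i)
      (disjoint_compl_left.mono_right (hKV i))
  set B : X → E := fun y => A y + ∑ i ∈ s, φ i y • (L i - A y)
  have hB_floor : ∀ i ∈ s, ∀ y ∈ V i, B y = A y + φ i y • (L i - A y) := by
    intro i hi y hy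
    refine congrArg (A y + ·) (Finset.sum_eq_single_of_mem i hi fun j hj hji => ?_)
    have hyj : y ∉ V j := fun hyj => (hdisj hj hi hji).ne_of_mem hyj hy rfl
    rw [hφ0 j hyj, Pi.zero_apply, zero_smul]
  have hB_off : ∀ y, y ∉ ⋃ i ∈ s, V i → B y = A y := by
    intro y hy
    refine add_eq_left.2 (Finset.sum_eq_zero fun i hi => ?_)
    rw [hφ0 i fun hyi => hy (mem_biUnion hi hyi), Pi.zero_apply, zero_smul]
  refine ⟨B, ?_, fun y => ?_, fun i hi y hy => ?_, hB_off⟩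
  · exact hA.add <| continuous_finsetSum _ fun i _ =>
      (φ i).continuous.smul (continuous_const.sub hA)
  · by_cases hy : y ∈ ⋃ i ∈ s, V i
    · obtain ⟨i, hi, hyi⟩ := mem_iUnion₂.1 hy
      calc ‖A y - B y‖ = |φ i y| * ‖L i - A y‖ := by
            rw [hB_floor i hi y hyi, sub_add_cancel_left, norm_neg, norm_smul, Real.norm_eq_abs]
        _ ≤ 1 * ‖L i - A y‖ := by
            gcongr; exact abs_le.2 ⟨by linarith [(hφ01 i y).1], (hφ01 i y).2⟩
        _ < ε := by rw [one_mul]; exact hL i hi y hyi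
    · rw [hB_off y hy, sub_self, norm_zero]
      exact hε
  · rw [hB_floor i hi y (hKV i hy), hφ1 i hy, Pi.one_apply, one_smul, add_sub_cancel]

theorem exists_glued_perturbation_general
    {X : Type*} [MetricSpace X] (d : ℕ) (f : X ≃ₜ X)
    (A : X → (EuclideanSpace ℝ (Fin d) →L[ℝ] EuclideanSpace ℝ (Fin d)))
    (hA : Continuous A)
    (x : X) (hx : ∀ k : ℕ, 1 ≤ k → (⇑f)^[k] x ≠ x)
    (n : ℕ) (ε : ℝ) (hε : ε ∈ Set.Ioo (0 : ℝ) 1)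
    (L : ℕ → (EuclideanSpace ℝ (Fin d) →L[ℝ] EuclideanSpace ℝ (Fin d)))
    (hL : ∀ i < n, ‖L i - A ((⇑f)^[i] x)‖ < ε / 2) :
    ∃ U : Set X, IsOpen U ∧ x ∈ U ∧
      (∀ i j : ℕ, i < n → j < n → i ≠ j →
        Disjoint ((⇑f)^[i] '' U) ((⇑f)^[j] '' U)) ∧
      ∀ V : Set X, IsOpen V → V ⊆ U → ∀ K : Set X, IsCompact K → K ⊆ V →
        ∃ B : X → (EuclideanSpace ℝ (Fin d) →L[ℝ] EuclideanSpace ℝ (Fin d)),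
          Continuous B ∧
          (∀ y : X, ‖A y - B y‖ < ε) ∧
          (∀ i < n, ∀ y ∈ (⇑f)^[i] '' K, B y = L i) ∧
          (∀ y : X, y ∉ (⋃ i ∈ Finset.range n, (⇑f)^[i] '' V) → B y = A y) := by
  have hinj : (Iio n).InjOn ((⇑f)^[·] x) :=
    (f.injective.iterate_apply_injective fun ⟨k, hk, hper⟩ => hx k hk hper).injOn
  obtain ⟨U, hUo, hxU, hUA, hUdisj⟩ := exists_isOpen_iterate_image_subset_pairwiseDisjoint
    f.continuous hinj (W := fun i => {y | ‖A y - A ((⇑f)^[i] x)‖ < ε / 2})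
    (fun _ _ => isOpen_lt (hA.sub continuous_const).norm continuous_const)
    (fun _ _ => by simpa using half_pos hε.1)
  refine ⟨U, hUo, hxU, fun i j hi hj hij => hUdisj hi hj hij, fun V hV hVU K hK hKV => ?_⟩
  have hLV : ∀ i ∈ Finset.range n, ∀ y ∈ (⇑f)^[i] '' V, ‖L i - A y‖ < ε := by
    intro i hi y hy
    have hAy := hUA i (Finset.mem_range.1 hi) (image_mono hVU hy)
    calc ‖L i - A y‖ ≤ ‖L i - A ((⇑f)^[i] x)‖ + ‖A ((⇑f)^[i] x) - A y‖ :=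
          norm_sub_le_norm_sub_add_norm_sub ..
      _ < ε / 2 + ε / 2 := add_lt_add (hL i (Finset.mem_range.1 hi)) (by rwa [norm_sub_rev])
      _ = ε := add_halves ε
  obtain ⟨B, hB, hAB, hBK, hBA⟩ := exists_continuous_perturbation_of_pairwiseDisjoint hA hε.1
    (fun i => f.isOpenMap.iterate i V hV) (fun i => (hK.image (f.continuous.iterate i)).isClosed)
    (fun i => image_mono hKV)
    (by rw [Finset.coe_range]; exact hUdisj.mono_on fun i _ => image_mono hVU) hLV
  exact ⟨B, hB, hAB, fun i hi => hBK i (Finset.mem_range.2 hi), hBA⟩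

theorem exists_glued_perturbation
    {X : Type*} [MetricSpace X] [CompactSpace X] (d : ℕ) (f : X ≃ₜ X)
    (A : X → (EuclideanSpace ℝ (Fin d) →L[ℝ] EuclideanSpace ℝ (Fin d)))
    (hA : Continuous A)
    (x : X) (hx : ∀ k : ℕ, 1 ≤ k → (⇑f)^[k] x ≠ x)
    (n : ℕ) (hn : 1 ≤ n) (ε : ℝ) (hε : ε ∈ Set.Ioo (0 : ℝ) 1)
    (L : ℕ → (EuclideanSpace ℝ (Fin d) →L[ℝ] EuclideanSpace ℝ (Fin d)))
    (hL : ∀ i < n, ‖L i - A ((⇑f)^[i] x)‖ < ε / 2) :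
    ∃ U : Set X, IsOpen U ∧ x ∈ U ∧
      (∀ i j : ℕ, i < n → j < n → i ≠ j →
        Disjoint ((⇑f)^[i] '' U) ((⇑f)^[j] '' U)) ∧
      ∀ V : Set X, IsOpen V → V ⊆ U → ∀ K : Set X, IsCompact K → K ⊆ V →
        ∃ B : X → (EuclideanSpace ℝ (Fin d) →L[ℝ] EuclideanSpace ℝ (Fin d)),
          Continuous B ∧
          (∀ y : X, ‖A y - B y‖ < ε) ∧
          (∀ i < n, ∀ y ∈ (⇑f)^[i] '' K, B y = L i) ∧
          (∀ y : X, y ∉ (⋃ i ∈ Finset.range n, (⇑f)^[i] '' V) → B y = A y) :=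
  exists_glued_perturbation_general d f A hA x hx n ε hε L hL
end
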